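/- arXiv:1909.12350 — 4 statements merged into one kernel-verified Lean document; each statement's English description precedes it below -/
import Mathlib

section
/- There is an absolute constant C such that the following holds. Let G be a compact abelian group with Haar probability measure μ, let S ⊆ Ĝ be finite, let ε₀ > 0, let δ = 1/N for a positive integer N, and suppose ρ ≤ ε₀δ/|S|. Then the set of x ∈ G for which the translate x + B(S,ρ) is not entirely contained in the single part of the Bohr partition 𝔅(S,δ) containing x has measure at most Cε₀. -/
open MeasureTheory

noncomputable section

/-- A character of a compact abelian group, valued in `ℝ/ℤ`. -/
abbrev GChar (G : Type) [AddCommGroup G] [TopologicalSpace G] :=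
  ContinuousAddMonoidHom G (AddCircle (1:ℝ))

/-- The Bohr set `B(S,ρ) = {x : ‖ξ(x)‖_{ℝ/ℤ} < ρ for all ξ ∈ S}`. -/
def BohrSet {G : Type} [AddCommGroup G] [TopologicalSpace G]
    (S : Finset (GChar G)) (ρ : ℝ) : Set G :=
  {x | ∀ ξ ∈ S, ‖ξ x‖ < ρ}

/-- The arc `[k/N, (k+1)/N) ⊆ ℝ/ℤ`. -/
def circIco (N : ℕ) (k : Fin N) : Set (AddCircle (1:ℝ)) :=
  (fun r : ℝ => (r : AddCircle (1:ℝ))) '' Set.Ico ((k : ℝ)/N) (((k : ℝ)+1)/N)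

/-- The part of the Bohr partition `𝔅(S, 1/N)` indexed by `s`. -/
def BohrPart {G : Type} [AddCommGroup G] [TopologicalSpace G]
    (S : Finset (GChar G)) (N : ℕ) (s : {ξ // ξ ∈ S} → Fin N) : Set G :=
  {x | ∀ ξ : {ξ // ξ ∈ S}, (ξ : GChar G) x ∈ circIco N (s ξ)}

/-- The part of the Bohr partition `𝔅(S, 1/N)` containing `x`. -/
def BohrPartAt {G : Type} [AddCommGroup G] [TopologicalSpace G]
    (S : Finset (GChar G)) (N : ℕ) (x : G) : Set G :=
  {y | ∀ ξ ∈ S, ∀ k : Fin N, ξ x ∈ circIco N k → ξ y ∈ circIco N k}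

/-- The conditional expectation (projection) of `f` on the Bohr partition `𝔅(S, 1/N)`:
the average of `f` over the part containing the given point. -/
def partProj {G : Type} [AddCommGroup G] [TopologicalSpace G] [MeasurableSpace G]
    (μ : Measure G) (S : Finset (GChar G)) (N : ℕ) (f : G → ℝ) : G → ℝ :=
  fun x => ⨍ y in BohrPartAt S N x, f y ∂μ

/-- Convolution `μ_B * f` with the normalized indicator `μ_B = 1_B / μ(B)`. -/
def mollify {G : Type} [AddCommGroup G] [MeasurableSpace G]
    (μ : Measure G) (B : Set G) (f : G → ℝ) : G → ℝ :=
  fun x => (∫ y in B, f (x - y) ∂μ) / (μ B).toReal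

/-- Fourier coefficient `f̂(ξ) = ∫ f(x) e^{-2πi ξ(x)} dμ(x)`. -/
def fCoeff {G : Type} [AddCommGroup G] [TopologicalSpace G] [MeasurableSpace G]
    (μ : Measure G) (f : G → ℂ) (ξ : GChar G) : ℂ :=
  ∫ x, f x * (AddCircle.toCircle (-(ξ x)) : ℂ) ∂μ


lemma acircle_lift (a : AddCircle (1:ℝ)) :
    ∃ u : ℝ, (u : AddCircle (1:ℝ)) = a ∧ |u| = ‖a‖ := by
  induction a using QuotientAddGroup.induction_on with
  | H v =>
    refine ⟨v - round v, ?_, ?_⟩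
    · have : ((round v : ℝ) : AddCircle (1:ℝ)) = 0 := by
        rw [AddCircle.coe_eq_zero_iff]
        exact ⟨round v, by simp⟩
      rw [sub_eq_add_neg, AddCircle.coe_add]
      simp [this]
    · rw [AddCircle.norm_eq]
      norm_num

lemma acircle_norm_le (v : ℝ) (m : ℤ) : ‖(v : AddCircle (1:ℝ))‖ ≤ |v - m| := by
  rw [AddCircle.norm_eq]
  simpa using round_le v m

lemma acircle_nsmul_zero {N : ℕ} (hN : 0 < N) {a : AddCircle (1:ℝ)}
    (h : N • a = 0) (hn : ‖a‖ < 1 / N) : a = 0 := by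
  obtain ⟨u, rfl, hu⟩ := acircle_lift a
  rw [← AddCircle.coe_nsmul, AddCircle.coe_eq_zero_iff] at h
  obtain ⟨m, hm⟩ := h
  have hm' : (m : ℝ) = N * u := by
    push_cast [zsmul_eq_mul, nsmul_eq_mul] at hm
    linarith
  have hNu : |(m:ℝ)| < 1 := by
    rw [hm', abs_mul]
    rw [Nat.abs_cast]
    have hN' : (0:ℝ) < N := by exact_mod_cast hN
    calc (N:ℝ) * |u| < (N:ℝ) * (1/N) := by
          rw [← hu] at hn
          exact (mul_lt_mul_iff_right₀ hN').2 hn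
      _ = 1 := by field_simp
  have hm0 : m = 0 := by
    have h2 := abs_lt.1 hNu
    exact_mod_cast (by constructor <;> [exact_mod_cast h2.1; exact_mod_cast h2.2] : (-1:ℤ) < m ∧ m < 1) |>.elim (fun h1 h2 => by omega)
  have hu0 : u = 0 := by
    have hN' : (0:ℝ) < N := by exact_mod_cast hN
    have : (N:ℝ) * u = 0 := by rw [← hm', hm0]; simp
    rcases mul_eq_zero.1 this with h | h
    · exact absurd h (ne_of_gt hN')
    · exact h
  rw [hu0]; simp

lemma boundary_real {N : ℕ} (hN : 0 < N) {k : ℕ} {u cc ρ : ℝ}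
    (hu1 : (k:ℝ)/N ≤ u) (hu2 : u < ((k:ℝ)+1)/N) (hcc : |cc| < ρ)
    (hout : u + cc < (k:ℝ)/N ∨ ((k:ℝ)+1)/N ≤ u + cc) :
    ∃ m : ℤ, |(N:ℝ)*u - m| < (N:ℝ)*ρ := by
  have hN' : (0:ℝ) < N := by exact_mod_cast hN
  have habs := abs_lt.1 hcc
  have hρ0 : 0 < ρ := lt_of_le_of_lt (abs_nonneg cc) hcc
  have hu1' : (k:ℝ) ≤ N*u := by rw [div_le_iff₀ hN'] at hu1; linarith
  have hu2' : (N:ℝ)*u < k+1 := by rw [lt_div_iff₀ hN'] at hu2; linarith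
  rcases hout with h | h
  · have h' : (u+cc)*N < (k:ℝ) := (lt_div_iff₀ hN').1 h
    refine ⟨(k:ℤ), abs_lt.2 ⟨?_, ?_⟩⟩ <;> push_cast <;> nlinarith
  · have h' : (k:ℝ)+1 ≤ (u+cc)*N := (div_le_iff₀ hN').1 h
    refine ⟨(k:ℤ)+1, abs_lt.2 ⟨?_, ?_⟩⟩ <;> push_cast <;> nlinarith

lemma measure_small_fiber {G : Type} [AddCommGroup G] [TopologicalSpace G]
    [IsTopologicalAddGroup G] [MeasurableSpace G] [BorelSpace G]
    (μ : Measure G) [IsProbabilityMeasure μ] [μ.IsAddLeftInvariant]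
    (η : G →+ AddCircle (1:ℝ)) (hη : Continuous η)
    {σ : ℝ} (hσ : σ ≤ 1/8) {y₀ : G} (hy0 : η y₀ ≠ 0) (hyσ : ‖η y₀‖ < σ) :
    μ {x | ‖η x‖ < σ} ≤ ENNReal.ofReal (8*σ) := by
  have hτ : 0 < ‖η y₀‖ := norm_pos_iff.2 hy0
  have hσ0 : 0 < σ := hτ.trans hyσ
  -- get a positive small lift
  obtain ⟨y, a, hya, ha0, haσ⟩ :
      ∃ (y : G) (a : ℝ), (a : AddCircle (1:ℝ)) = η y ∧ 0 < a ∧ a < σ := by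
    obtain ⟨u, hu, huabs⟩ := acircle_lift (η y₀)
    rcases abs_cases u with ⟨h1, _⟩ | ⟨h1, _⟩
    · exact ⟨y₀, u, hu, by linarith, by linarith⟩
    · refine ⟨-y₀, -u, ?_, by linarith, by linarith⟩
      rw [map_neg, ← hu, AddCircle.coe_neg]
  set M : ℕ := ⌊1/(4*σ)⌋₊ with hMdef
  have h4σ : 0 < 4*σ := by linarith
  have hM2 : 2 ≤ M := by
    apply Nat.le_floor
    rw [le_div_iff₀ h4σ]
    push_cast; linarith
  have hM1 : 4*σ*M ≤ 1 := by
    have := Nat.floor_le (le_of_lt (by positivity : (0:ℝ) < 1/(4*σ)))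
    rw [← hMdef] at this
    calc 4*σ*M ≤ 4*σ*(1/(4*σ)) := by
          apply mul_le_mul_of_nonneg_left this (le_of_lt h4σ)
      _ = 1 := by field_simp
  -- translation points
  set n : Fin M → ℕ := fun j => ⌈(4*σ*j)/a⌉₊ with hndef
  set c : Fin M → ℝ := fun j => n j * a with hcdef
  have hcge : ∀ j : Fin M, 4*σ*j ≤ c j := by
    intro j
    have := Nat.le_ceil ((4*σ*j)/a)
    calc (4*σ*j : ℝ) = ((4*σ*j)/a) * a := by field_simp
      _ ≤ n j * a := mul_le_mul_of_nonneg_right this (le_of_lt ha0)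
  have hclt : ∀ j : Fin M, c j < 4*σ*j + a := by
    intro j
    have harg : (0:ℝ) ≤ (4*σ*j)/a := by positivity
    have := Nat.ceil_lt_add_one harg
    calc c j = (⌈(4*σ*j)/a⌉₊ : ℝ) * a := rfl
      _ < ((4*σ*j)/a + 1) * a := by
          exact mul_lt_mul_of_pos_right this ha0
      _ = 4*σ*j + a := by field_simp
  set A : Set G := {x | ‖η x‖ < σ} with hAdef
  have hAopen : IsOpen A := by
    have : A = η ⁻¹' {b | ‖b‖ < σ} := rfl
    rw [this]
    exact (isOpen_lt continuous_norm continuous_const).preimage hη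
  set Aj : Fin M → Set G := fun j => (fun x => (n j • y) + x) ⁻¹' A with hAjdef
  have hAjmeas : ∀ j, MeasurableSet (Aj j) :=
    fun j => (hAopen.preimage (continuous_add_left _)).measurableSet
  have hAjμ : ∀ j, μ (Aj j) = μ A := fun j => measure_preimage_add μ _ A
  -- membership description
  have hmem : ∀ (j : Fin M) (x : G), x ∈ Aj j → ‖((c j : ℝ) : AddCircle (1:ℝ)) + η x‖ < σ := by
    intro j x hx
    have : η (n j • y + x) = ((c j : ℝ) : AddCircle (1:ℝ)) + η x := by
      rw [map_add, map_nsmul, ← hya, ← AddCircle.coe_nsmul]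
      norm_num [hcdef, nsmul_eq_mul]
    have hx' : ‖η (n j • y + x)‖ < σ := hx
    rwa [this] at hx'
  -- disjointness
  have hdisj : Pairwise (Function.onFun Disjoint Aj) := by
    have key : ∀ i j : Fin M, (i:ℕ) < (j:ℕ) → Disjoint (Aj i) (Aj j) := by
      intro i j hij
      rw [Set.disjoint_left]
      intro x hxi hxj
      have h1 := hmem i x hxi
      have h2 := hmem j x hxj
      set v : ℝ := c j - c i with hvdef
      have hnorm2 : ‖((v : ℝ) : AddCircle (1:ℝ))‖ < 2*σ := by
        have : ((v : ℝ) : AddCircle (1:ℝ)) =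
            (((c j : ℝ) : AddCircle (1:ℝ)) + η x) - (((c i : ℝ) : AddCircle (1:ℝ)) + η x) := by
          rw [hvdef, AddCircle.coe_sub]; abel
        rw [this]
        calc ‖_ - _‖ ≤ ‖((c j : ℝ) : AddCircle (1:ℝ)) + η x‖ + ‖((c i : ℝ) : AddCircle (1:ℝ)) + η x‖ :=
              norm_sub_le _ _
          _ < 2*σ := by linarith
      -- real bounds on v
      have hji : (i:ℝ) + 1 ≤ (j:ℝ) := by exact_mod_cast hij
      have hjM : (j:ℝ) ≤ (M:ℝ) - 1 := by
        have : (j:ℕ) ≤ M - 1 := Nat.le_pred_of_lt j.isLt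
        have h' : ((j:ℕ):ℝ) ≤ ((M-1 : ℕ):ℝ) := by exact_mod_cast this
        rwa [Nat.cast_sub (by omega), Nat.cast_one] at h'
      have hv1 : 3*σ < v := by
        have := hcge j; have := hclt i
        nlinarith
      have hv2 : v < 1 - 3*σ := by
        have := hclt j; have := hcge i
        have hcgei := hcge i
        nlinarith
      -- contradiction with circle norm
      have := acircle_norm_le v (round v)
      have hlow : ‖((v : ℝ) : AddCircle (1:ℝ))‖ ≥ 2*σ := by
        by_contra hcon
        push_neg at hcon
        have habs : |v - round v| < 2*σ := by
          rw [AddCircle.norm_eq] at hcon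
          simpa using hcon
        have h5 := abs_lt.1 habs
        have hr1 : (0:ℝ) < round v := by linarith
        have hr2 : (round v : ℝ) < 1 := by linarith
        have : (1:ℤ) ≤ round v := by exact_mod_cast hr1
        have : (1:ℝ) ≤ (round v : ℝ) := by exact_mod_cast this
        linarith
      linarith
    intro i j hij
    rcases lt_or_gt_of_ne (fun h : (i:ℕ) = (j:ℕ) => hij (Fin.ext h)) with h | h
    · exact key i j h
    · exact (key j i h).symm
  -- sum up
  have hsum : (M : ENNReal) * μ A ≤ 1 := by
    have hiU : μ (⋃ j, Aj j) = ∑' j, μ (Aj j) := measure_iUnion hdisj hAjmeas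
    have : ∑' j : Fin M, μ (Aj j) = (M : ENNReal) * μ A := by
      rw [tsum_fintype]
      simp [hAjμ, Finset.sum_const, nsmul_eq_mul]
    rw [← this, ← hiU]
    exact (measure_mono (Set.subset_univ _)).trans (by simp)
  -- conclude
  have hMpos : (0:ℝ) < M := by exact_mod_cast (by omega : 0 < M)
  have h8σ : (0:ℝ) < 8*σ := by linarith
  have hMbig : (1:ℝ)/(8*σ) ≤ M := by
    have hfl : 1/(4*σ) - 1 < (M:ℝ) := by
      exact_mod_cast Nat.sub_one_lt_floor (1/(4*σ))
    have h8 : (1:ℝ) ≤ 1/(8*σ) := by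
      rw [le_div_iff₀ h8σ]; linarith
    have hhalf : (1:ℝ)/(4*σ) = 2*(1/(8*σ)) := by
      field_simp; ring
    linarith
  have hMinv : (M:ℝ)⁻¹ ≤ 8*σ := by
    rw [inv_le_iff_one_le_mul₀ hMpos]
    rw [div_le_iff₀ h8σ] at hMbig
    linarith
  calc μ A ≤ (M : ENNReal)⁻¹ := by
        rw [ENNReal.le_inv_iff_mul_le, mul_comm]
        exact hsum
    _ = ENNReal.ofReal ((M:ℝ)⁻¹) := by
        rw [ENNReal.ofReal_inv_of_pos hMpos, ENNReal.ofReal_natCast]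
    _ ≤ ENNReal.ofReal (8*σ) := ENNReal.ofReal_le_ofReal hMinv


/-- Proposition 2.2, part 1: if `ρ ≤ ε₀δ/|S|` with `δ = 1/N`, then for all `x` outside a set of
measure `O(ε₀)`, the translate `x + B(S,ρ)` lies inside the part of `𝔅(S,δ)` containing `x`. -/
theorem translate_in_bohr_part :
    ∃ C : ℝ, 0 < C ∧
      ∀ (G : Type) [AddCommGroup G] [TopologicalSpace G] [IsTopologicalAddGroup G]
        [CompactSpace G] [MeasurableSpace G] [BorelSpace G]
        (μ : Measure G) [IsProbabilityMeasure μ] [μ.IsAddHaarMeasure]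
        (S : Finset (GChar G)) (ε₀ ρ : ℝ) (N : ℕ), 0 < ε₀ → 0 < N → 0 < ρ →
        ρ ≤ ε₀ * ((1:ℝ)/N) / S.card →
        μ {x : G | ∃ s : {ξ // ξ ∈ S} → Fin N, x ∈ BohrPart S N s ∧
            ¬ ((fun r => x + r) '' BohrSet S ρ ⊆ BohrPart S N s)} ≤
          ENNReal.ofReal (C * ε₀) := by
  refine ⟨8, by norm_num, ?_⟩
  intro G _ _ _ _ _ _ μ _ _ S ε₀ ρ N hε₀ hN hρ hρle
  by_cases hbig : (1:ℝ)/8 ≤ ε₀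
  · calc μ _ ≤ 1 := prob_le_one
      _ ≤ ENNReal.ofReal (8*ε₀) := by
          rw [ENNReal.one_le_ofReal]
          linarith
  push_neg at hbig
  have hN' : (0:ℝ) < N := by exact_mod_cast hN
  have hScard : 0 < S.card := by
    rcases Nat.eq_zero_or_pos S.card with h | h
    · exfalso
      rw [h] at hρle
      simp at hρle
      linarith
    · exact h
  have hcard' : (1:ℝ) ≤ S.card := by exact_mod_cast hScard
  have hcardpos : (0:ℝ) < S.card := by linarith
  have hNρS : (N:ℝ) * ρ * S.card ≤ ε₀ := by
    rw [le_div_iff₀ hcardpos] at hρle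
    have hNinv : (N:ℝ) * (1/N) = 1 := by field_simp
    nlinarith
  have hσ8 : (N:ℝ)*ρ ≤ 1/8 := by nlinarith
  have hρN : ρ < 1/(N:ℝ) := by
    rw [lt_div_iff₀ hN']
    nlinarith
  set Bad : GChar G → Set G := fun ξ =>
    {x | ‖(N • ξ x)‖ < (N:ℝ)*ρ ∧ ∃ r : G, ‖ξ r‖ < ρ ∧ N • ξ r ≠ 0} with hBadDef
  have hsub : {x : G | ∃ s : {ξ // ξ ∈ S} → Fin N, x ∈ BohrPart S N s ∧
      ¬ ((fun r => x + r) '' BohrSet S ρ ⊆ BohrPart S N s)} ⊆ ⋃ ξ ∈ S, Bad ξ := by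
    rintro x ⟨s, hxs, hns⟩
    rw [Set.not_subset] at hns
    obtain ⟨z, hz, hzn⟩ := hns
    obtain ⟨r, hrB, rfl⟩ := hz
    simp only [BohrPart, Set.mem_setOf_eq, not_forall] at hzn
    obtain ⟨ξ', hξn⟩ := hzn
    refine Set.mem_biUnion ξ'.2 ?_
    set ξ : GChar G := (ξ' : GChar G) with hξdef
    have hxk : ξ x ∈ circIco N (s ξ') := hxs ξ'
    have hrρ : ‖ξ r‖ < ρ := hrB ξ ξ'.2
    have hNr : N • ξ r ≠ 0 := by
      intro h0
      have hr0 : ξ r = 0 := acircle_nsmul_zero hN h0 (lt_trans hrρ hρN)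
      apply hξn
      have : ξ (x + r) = ξ x := by rw [map_add, hr0, add_zero]
      rw [this]
      exact hxk
    obtain ⟨u, huIco, hucoe⟩ := hxk
    obtain ⟨cc, hcccoe, hccabs⟩ := acircle_lift (ξ r)
    have hccρ : |cc| < ρ := by rw [hccabs]; exact hrρ
    have hout : u + cc < ((s ξ' : ℕ):ℝ)/N ∨ (((s ξ' : ℕ):ℝ)+1)/N ≤ u + cc := by
      by_contra hcon
      push_neg at hcon
      apply hξn
      refine ⟨u + cc, ⟨hcon.1, hcon.2⟩, ?_⟩
      show ((u + cc : ℝ) : AddCircle (1:ℝ)) = ξ (x + r)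
      rw [AddCircle.coe_add, map_add]
      rw [show ((u:ℝ) : AddCircle (1:ℝ)) = ξ x from hucoe, hcccoe]
    obtain ⟨m, hm⟩ := boundary_real hN huIco.1 huIco.2 hccρ hout
    constructor
    · have hx' : N • ξ x = (((N:ℝ)*u : ℝ) : AddCircle (1:ℝ)) := by
        rw [← hucoe, ← AddCircle.coe_nsmul]
        norm_num [nsmul_eq_mul]
      rw [hx']
      exact lt_of_le_of_lt (acircle_norm_le _ m) hm
    · exact ⟨r, hrρ, hNr⟩
  have hper : ∀ ξ ∈ S, μ (Bad ξ) ≤ ENNReal.ofReal (8*((N:ℝ)*ρ)) := by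
    intro ξ hξ
    by_cases hw : ∃ r : G, ‖ξ r‖ < ρ ∧ N • ξ r ≠ 0
    · obtain ⟨r, hr1, hr2⟩ := hw
      have hη : Continuous (fun x : G => N • ξ x) :=
        (map_continuous ξ).nsmul N
      have hnorm : ‖N • ξ r‖ < (N:ℝ)*ρ :=
        lt_of_le_of_lt (norm_nsmul_le (n := N) (a := ξ r))
          (by exact (mul_lt_mul_iff_right₀ hN').2 hr1)
      have hb := measure_small_fiber μ
        (AddMonoidHom.mk' (fun x : G => N • ξ x) (by
          intro a b
          show N • ξ (a + b) = N • ξ a + N • ξ b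
          rw [map_add, smul_add]))
        hη hσ8 (y₀ := r) hr2 hnorm
      refine le_trans (measure_mono ?_) hb
      intro x hx
      exact hx.1
    · have hBe : Bad ξ = ∅ := by
        ext x
        simp only [hBadDef, Set.mem_setOf_eq, Set.mem_empty_iff_false, iff_false]
        intro hx
        exact hw hx.2
      rw [hBe]
      simp
  calc μ _ ≤ μ (⋃ ξ ∈ S, Bad ξ) := measure_mono hsub
    _ ≤ ∑ ξ ∈ S, μ (Bad ξ) := measure_biUnion_finset_le S Bad
    _ ≤ ∑ _ξ ∈ S, ENNReal.ofReal (8*((N:ℝ)*ρ)) := Finset.sum_le_sum hper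
    _ = S.card • ENNReal.ofReal (8*((N:ℝ)*ρ)) := by rw [Finset.sum_const]
    _ ≤ ENNReal.ofReal (8*ε₀) := by
        rw [nsmul_eq_mul, ← ENNReal.ofReal_natCast, ← ENNReal.ofReal_mul (by positivity)]
        refine ENNReal.ofReal_le_ofReal ?_
        nlinarith
end
end

section
/- There is an absolute constant C such that the following holds. Let G be a compact abelian group with Haar probability measure μ, let S ⊆ Ĝ be finite, let ε₀ > 0, let δ = 1/N for a positive integer N, and let ρ > 0 satisfy ρ ≤ ε₀²δ/|S|. Set 𝔅 = 𝔅(S,δ) and B = B(S,ρ). Then for every measurable f: G → [0,1], ‖f|_𝔅 − μ_B * (f|_𝔅)‖_{L²} ≤ Cε₀, where * denotes convolution on G. -/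
open MeasureTheory
open scoped ENNReal

noncomputable section

namespace Aux

local instance : Fact ((0:ℝ) < 1) := ⟨one_pos⟩

/-- representative in [0,1) -/
def rA (v : AddCircle (1:ℝ)) : ℝ := (AddCircle.equivIco 1 0 v : ℝ)

lemma rA_mem (v : AddCircle (1:ℝ)) : rA v ∈ Set.Ico (0:ℝ) 1 := by
  have h := (AddCircle.equivIco 1 0 v).2
  simpa [rA] using h

lemma rA_coe (v : AddCircle (1:ℝ)) : ((rA v : ℝ) : AddCircle (1:ℝ)) = v := by
  exact (AddCircle.equivIco 1 0).symm_apply_apply v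

lemma rA_cast (x : ℝ) : rA ((x : ℝ) : AddCircle (1:ℝ)) = Int.fract x := by
  have := AddCircle.coe_equivIco_mk_apply (𝕜 := ℝ) (p := 1) x
  simpa [rA] using this

lemma measurable_rA : Measurable rA := by
  have : Measurable fun v : AddCircle (1:ℝ) =>
      (AddCircle.measurableEquivIco (T := 1) 0 v : ℝ) :=
    measurable_subtype_coe.comp (AddCircle.measurableEquivIco (T := 1) 0).measurable
  exact this

end Aux
namespace Aux2
open Aux

variable (N : ℕ)

/-- fractional position within the 1/N arc, scaled: `Int.fract (N * rA v)` -/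
def FF (v : AddCircle (1:ℝ)) : ℝ := Int.fract ((N : ℝ) * rA v)

/-- label of the arc containing v -/
def labb (v : AddCircle (1:ℝ)) : ℕ := ⌊(N : ℝ) * rA v⌋₊

lemma FF_cast (x : ℝ) : FF N ((x : ℝ) : AddCircle (1:ℝ)) = Int.fract ((N:ℝ) * x) := by
  rw [FF, rA_cast]
  refine Int.fract_eq_fract.2 ⟨-(N * ⌊x⌋), ?_⟩
  rw [Int.fract]; push_cast; ring

lemma FF_nonneg (v : AddCircle (1:ℝ)) : 0 ≤ FF N v := Int.fract_nonneg _

lemma FF_lt_one (v : AddCircle (1:ℝ)) : FF N v < 1 := Int.fract_lt_one _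

lemma measurable_FF : Measurable (FF N) :=
  (measurable_fract.comp ((measurable_const_mul _).comp measurable_rA))

lemma measurable_labb : Measurable (labb N) :=
  Nat.measurable_floor.comp ((measurable_const_mul _).comp measurable_rA)

lemma labb_lt (hN : 0 < N) (v : AddCircle (1:ℝ)) : labb N v < N := by
  have hNR : (0:ℝ) < N := by exact_mod_cast hN
  have h1 : (N : ℝ) * rA v < N := by nlinarith [(rA_mem v).2, (rA_mem v).1]
  exact Nat.floor_lt (mul_nonneg (Nat.cast_nonneg N) (rA_mem v).1) |>.2 (by exact_mod_cast h1)

lemma mem_circIco_iff {N : ℕ} (k : Fin N) (v : AddCircle (1:ℝ)) :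
    v ∈ circIco N k ↔ labb N v = (k : ℕ) := by
  have hN : 0 < N := k.pos
  have hNR : (0:ℝ) < N := by exact_mod_cast hN
  constructor
  · rintro ⟨s, hs, rfl⟩
    have hs0 : (0:ℝ) ≤ s := le_trans (by positivity) hs.1
    have hs1 : s < 1 := lt_of_lt_of_le hs.2 (by
      rw [div_le_one hNR]; exact_mod_cast Nat.succ_le_of_lt k.2)
    have hr : rA ((s : ℝ) : AddCircle (1:ℝ)) = s := by
      rw [rA_cast]; exact Int.fract_eq_self.2 ⟨hs0, hs1⟩
    rw [labb, hr]
    rw [Nat.floor_eq_iff (by positivity)]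
    constructor
    · calc ((k:ℕ):ℝ) = N * ((k:ℝ)/N) := by field_simp
      _ ≤ N * s := by gcongr; exact hs.1
    · calc (N:ℝ) * s < N * (((k:ℝ)+1)/N) := by gcongr; exact hs.2
      _ = (k:ℕ) + 1 := by field_simp
  · intro h
    refine ⟨rA v, ?_, rA_coe v⟩
    have h' := Nat.floor_eq_iff (R := ℝ) (mul_nonneg (Nat.cast_nonneg N) (rA_mem v).1) |>.1 h
    constructor
    · rw [div_le_iff₀ hNR]; linarith [h'.1]
    · rw [lt_div_iff₀ hNR]; push_cast at h' ⊢; linarith [h'.2]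

lemma exists_mem_circIco (hN : 0 < N) (v : AddCircle (1:ℝ)) :
    v ∈ circIco N ⟨labb N v, labb_lt N hN v⟩ :=
  (mem_circIco_iff _ v).2 rfl

/-- shifting down by t₀ ≤ FF/N keeps the label -/
lemma labb_sub (hN : 0 < N) (v : AddCircle (1:ℝ)) {t₀ : ℝ} (ht0 : 0 ≤ t₀)
    (ht : (N:ℝ) * t₀ ≤ FF N v) :
    labb N (v - ((t₀ : ℝ) : AddCircle (1:ℝ))) = labb N v := by
  have hNR : (0:ℝ) < N := by exact_mod_cast hN
  have hx0 : 0 ≤ rA v := (rA_mem v).1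
  have hx1 : rA v < 1 := (rA_mem v).2
  have hK1 : ((⌊(N:ℝ) * rA v⌋₊ : ℝ)) ≤ (N:ℝ) * rA v := Nat.floor_le (by positivity)
  have hK2 : (N:ℝ) * rA v < (⌊(N:ℝ) * rA v⌋₊ : ℝ) + 1 := Nat.lt_floor_add_one _
  have hFF : FF N v = (N:ℝ) * rA v - (⌊(N:ℝ) * rA v⌋₊ : ℝ) := by
    rw [FF, Int.fract, ← Int.natCast_floor_eq_floor (mul_nonneg (Nat.cast_nonneg N) (rA_mem v).1)]
    norm_num
  have hle : ((⌊(N:ℝ) * rA v⌋₊ : ℝ)) ≤ (N:ℝ) * (rA v - t₀) := by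
    rw [hFF] at ht; nlinarith
  have hxt0 : 0 ≤ rA v - t₀ := by
    have : (0:ℝ) ≤ ((⌊(N:ℝ) * rA v⌋₊ : ℝ)) := by positivity
    nlinarith
  have hxt1 : rA v - t₀ < 1 := by linarith
  have hsub : v - ((t₀ : ℝ) : AddCircle (1:ℝ)) = (((rA v - t₀ : ℝ)) : AddCircle (1:ℝ)) := by
    conv_lhs => rw [← rA_coe v]
    rw [← AddCircle.coe_sub]
  rw [hsub, labb, rA_cast, Int.fract_eq_self.2 ⟨hxt0, hxt1⟩, labb]
  rw [Nat.floor_eq_iff (by positivity : (0:ℝ) ≤ (N:ℝ)*(rA v - t₀))]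
  constructor
  · exact hle
  · have : (N:ℝ)*(rA v - t₀) ≤ (N:ℝ) * rA v := by nlinarith
    linarith

/-- adding s increases FF by N*s as long as no wraparound -/
lemma FF_add (v : AddCircle (1:ℝ)) {s : ℝ} (hs : 0 ≤ s)
    (h1 : FF N v + (N:ℝ) * s < 1) :
    FF N (v + ((s : ℝ) : AddCircle (1:ℝ))) = FF N v + (N:ℝ) * s := by
  have hadd : v + ((s : ℝ) : AddCircle (1:ℝ)) = (((rA v + s : ℝ)) : AddCircle (1:ℝ)) := by
    conv_lhs => rw [← rA_coe v]
    rw [← AddCircle.coe_add]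
  rw [hadd, FF_cast, mul_add]
  have h2 : Int.fract ((N:ℝ) * rA v + (N:ℝ) * s) =
      Int.fract (Int.fract ((N:ℝ) * rA v) + (N:ℝ) * s) := by
    refine Int.fract_eq_fract.2 ⟨⌊(N:ℝ) * rA v⌋, ?_⟩
    rw [Int.fract]; ring
  rw [h2]
  exact Int.fract_eq_self.2 ⟨add_nonneg (Int.fract_nonneg _) (mul_nonneg (Nat.cast_nonneg N) hs), by simpa [FF] using h1⟩

end Aux2
namespace Aux3
open Aux Aux2

variable {G : Type} [AddCommGroup G] [TopologicalSpace G] [IsTopologicalAddGroup G]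
  [MeasurableSpace G] [BorelSpace G]

lemma lemA (μ : Measure G) [IsProbabilityMeasure μ] [μ.IsAddLeftInvariant]
    (ξ : GChar G) {N : ℕ} (hN : 0 < N) {y : G} {t₀ : ℝ} (ht0 : 0 ≤ t₀)
    (hy : ξ y = ((t₀:ℝ) : AddCircle (1:ℝ))) :
    μ {x | labb N (ξ x - ((t₀:ℝ):AddCircle (1:ℝ))) ≠ labb N (ξ x)} ≤
      ENNReal.ofReal (2 * N * t₀) := by
  have hmξ : Measurable ξ := ξ.continuous.measurable
  set c : ℝ := (N:ℝ) * t₀ with hc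
  have hc0 : 0 ≤ c := by positivity
  have hsub : {x | labb N (ξ x - ((t₀:ℝ):AddCircle (1:ℝ))) ≠ labb N (ξ x)} ⊆
      {x | FF N (ξ x) < c} := by
    intro x hx
    by_contra h
    exact hx (labb_sub N hN (ξ x) ht0 (not_lt.1 h))
  refine le_trans (measure_mono hsub) ?_
  have hofReal : ENNReal.ofReal (2 * N * t₀) = ENNReal.ofReal (2 * c) := by
    rw [hc]; ring_nf
  rw [hofReal]
  rcases eq_or_lt_of_le hc0 with hceq | hcpos
  · have : {x | FF N (ξ x) < c} = ∅ := by
      ext x; simp only [Set.mem_setOf_eq, Set.mem_empty_iff_false, iff_false, not_lt, ← hceq]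
      exact FF_nonneg N (ξ x)
    simp [this]
  rcases le_or_gt 1 c with hc1 | hc1
  · refine le_trans prob_le_one ?_
    rw [ENNReal.one_le_ofReal]; linarith
  -- main case 0 < c < 1
  set J : ℕ := ⌊1/c⌋₊ with hJ
  have h1c : (1:ℝ) ≤ 1/c := by rw [le_div_iff₀ hcpos]; linarith
  have hJ1 : 1 ≤ J := by
    rw [hJ]; exact_mod_cast Nat.le_floor (by exact_mod_cast h1c)
  have hJc : (J:ℝ) * c ≤ 1 := by
    have := Nat.floor_le (le_trans zero_le_one h1c)
    rw [← hJ] at this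
    calc (J:ℝ) * c ≤ (1/c) * c := by gcongr
    _ = 1 := by field_simp
  set A : ℕ → Set G := fun j => (fun x => FF N (ξ x)) ⁻¹' Set.Ico ((j:ℝ)*c) (((j:ℝ)+1)*c)
    with hA
  have hmA : ∀ j, MeasurableSet (A j) := fun j =>
    ((measurable_FF N).comp hmξ) measurableSet_Ico
  have hA0 : {x | FF N (ξ x) < c} ⊆ A 0 := by
    intro x hx
    exact ⟨by simpa using FF_nonneg N (ξ x), by simpa using hx⟩
  have hstep : ∀ j, j < J → ∀ x ∈ A 0, x + j • y ∈ A j := by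
    intro j hjJ x hx
    have hj1 : ((j:ℝ)+1) ≤ (J:ℝ) := by exact_mod_cast Nat.succ_le_of_lt hjJ
    have hxFF : FF N (ξ x) < c := by simpa using hx.2
    have hxi : ξ (x + j • y) = ξ x + (((j * t₀ : ℝ)) : AddCircle (1:ℝ)) := by
      rw [map_add, map_nsmul, hy]
      congr 1
      have : ((( (j:ℝ) * t₀ : ℝ)) : AddCircle (1:ℝ)) = j • (((t₀:ℝ)) : AddCircle (1:ℝ)) := by
        rw [← nsmul_eq_mul]
        exact map_nsmul (QuotientAddGroup.mk' (AddSubgroup.zmultiples (1:ℝ))) j t₀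
      rw [← this]
    have hlt1 : FF N (ξ x) + (N:ℝ) * ((j:ℝ) * t₀) < 1 := by
      have : (N:ℝ) * ((j:ℝ) * t₀) = (j:ℝ) * c := by rw [hc]; ring
      rw [this]
      calc FF N (ξ x) + (j:ℝ)*c < c + (j:ℝ)*c := by linarith
      _ = ((j:ℝ)+1)*c := by ring
      _ ≤ (J:ℝ)*c := by gcongr
      _ ≤ 1 := hJc
    have hFFadd := FF_add N (ξ x) (s := (j:ℝ) * t₀) (by positivity) hlt1
    have hjel : (N:ℝ) * ((j:ℝ) * t₀) = (j:ℝ) * c := by rw [hc]; ring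
    simp only [hA, Set.mem_preimage, Set.mem_Ico, hxi, hFFadd, hjel]
    constructor
    · have := FF_nonneg N (ξ x); linarith
    · calc FF N (ξ x) + (j:ℝ)*c < c + (j:ℝ)*c := by linarith
      _ = ((j:ℝ)+1)*c := by ring
  have hμA0 : ∀ j, j < J → μ (A 0) ≤ μ (A j) := by
    intro j hjJ
    have h1 : A 0 ⊆ (fun x => x + j • y) ⁻¹' (A j) := fun x hx => hstep j hjJ x hx
    calc μ (A 0) ≤ μ ((fun x => x + j • y) ⁻¹' (A j)) := measure_mono h1
    _ = μ (A j) := measure_preimage_add_right μ _ _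
  have hdisj : (↑(Finset.range J) : Set ℕ).PairwiseDisjoint A := by
    intro i _ j _ hij
    refine Set.disjoint_left.2 fun x hxi hxj => ?_
    rcases lt_or_gt_of_ne hij with h | h
    · have h1 : ((i:ℝ)+1) ≤ (j:ℝ) := by exact_mod_cast Nat.succ_le_of_lt h
      have := hxi.2; have := hxj.1
      have : ((i:ℝ)+1)*c ≤ (j:ℝ)*c := by gcongr
      replace hxi : (i:ℝ)*c ≤ FF N (ξ x) ∧ FF N (ξ x) < ((i:ℝ)+1)*c := hxi
      replace hxj : (j:ℝ)*c ≤ FF N (ξ x) ∧ FF N (ξ x) < ((j:ℝ)+1)*c := hxj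
      linarith [hxi.2, hxj.1]
    · have h1 : ((j:ℝ)+1) ≤ (i:ℝ) := by exact_mod_cast Nat.succ_le_of_lt h
      have : ((j:ℝ)+1)*c ≤ (i:ℝ)*c := by gcongr
      replace hxi : (i:ℝ)*c ≤ FF N (ξ x) ∧ FF N (ξ x) < ((i:ℝ)+1)*c := hxi
      replace hxj : (j:ℝ)*c ≤ FF N (ξ x) ∧ FF N (ξ x) < ((j:ℝ)+1)*c := hxj
      linarith [hxj.2, hxi.1]
  have hsum : (J : ENNReal) * μ (A 0) ≤ 1 := by
    calc (J : ENNReal) * μ (A 0) = ∑ j ∈ Finset.range J, μ (A 0) := by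
          rw [Finset.sum_const, Finset.card_range, nsmul_eq_mul]
    _ ≤ ∑ j ∈ Finset.range J, μ (A j) :=
          Finset.sum_le_sum fun j hj => hμA0 j (Finset.mem_range.1 hj)
    _ = μ (⋃ j ∈ Finset.range J, A j) :=
          (measure_biUnion_finset hdisj fun j _ => hmA j).symm
    _ ≤ 1 := prob_le_one
  have hμle : μ (A 0) ≤ (J : ENNReal)⁻¹ := by
    rw [ENNReal.le_inv_iff_mul_le]
    calc μ (A 0) * J = J * μ (A 0) := mul_comm _ _
    _ ≤ 1 := hsum
  refine le_trans (le_trans (measure_mono hA0) hμle) ?_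
  have hJR : (0:ℝ) < (J:ℝ) := by exact_mod_cast hJ1
  have key : ((J:ℝ))⁻¹ ≤ 2 * c := by
    have hJR1 : (1:ℝ) ≤ (J:ℝ) := by exact_mod_cast hJ1
    have h2 : 1/c < (J:ℝ) + 1 := Nat.lt_floor_add_one _
    have h3 : (J:ℝ) + 1 ≤ 2 * (J:ℝ) := by linarith
    have h4 : (1:ℝ) ≤ 2 * c * (J:ℝ) := by
      calc (1:ℝ) = (1/c) * c := by field_simp
      _ ≤ ((J:ℝ)+1) * c := mul_le_mul_of_nonneg_right h2.le hcpos.le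
      _ ≤ (2*(J:ℝ)) * c := by gcongr
      _ = 2 * c * (J:ℝ) := by ring
    calc ((J:ℝ))⁻¹ ≤ ((J:ℝ))⁻¹ * (2 * c * (J:ℝ)) := le_mul_of_one_le_right (by positivity) h4
    _ = 2 * c := by field_simp
  calc (J : ENNReal)⁻¹ = (ENNReal.ofReal (J:ℝ))⁻¹ := by rw [ENNReal.ofReal_natCast]
  _ = ENNReal.ofReal ((J:ℝ)⁻¹) := (ENNReal.ofReal_inv_of_pos hJR).symm
  _ ≤ ENNReal.ofReal (2*c) := ENNReal.ofReal_le_ofReal key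


lemma lemB (μ : Measure G) [IsProbabilityMeasure μ] [μ.IsAddLeftInvariant]
    (ξ : GChar G) {N : ℕ} (hN : 0 < N) (y : G) :
    μ {x | labb N (ξ (x - y)) ≠ labb N (ξ x)} ≤
      ENNReal.ofReal (2 * N * ‖ξ y‖) := by
  obtain ⟨x₀, hx₀⟩ : ∃ x₀ : ℝ, ((x₀ : ℝ) : AddCircle (1:ℝ)) = ξ y :=
    Quotient.exists_rep (ξ y)
  set c : ℝ := x₀ - round x₀ with hcdef
  have hcast : ((c : ℝ) : AddCircle (1:ℝ)) = ξ y := by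
    rw [hcdef, AddCircle.coe_sub, ← hx₀]
    have : (((round x₀ : ℝ)) : AddCircle (1:ℝ)) = 0 := by
      rw [AddCircle.coe_eq_zero_iff]
      exact ⟨round x₀, by simp⟩
    rw [this, sub_zero]
  have hnorm : ‖ξ y‖ = |c| := by
    rw [← hx₀, AddCircle.norm_eq]; simp [hcdef]
  rcases le_or_gt 0 c with hc0 | hc0
  · have hset : {x | labb N (ξ (x - y)) ≠ labb N (ξ x)} =
        {x | labb N (ξ x - ((c:ℝ) : AddCircle (1:ℝ))) ≠ labb N (ξ x)} := by
      ext x; simp only [Set.mem_setOf_eq, map_sub, hcast]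
    rw [hset, hnorm, abs_of_nonneg hc0]
    exact lemA μ ξ hN hc0 hcast.symm
  · set c' : ℝ := -c with hc'def
    have hc'0 : 0 ≤ c' := by rw [hc'def]; linarith
    have hcast' : ξ (-y) = ((c' : ℝ) : AddCircle (1:ℝ)) := by
      rw [map_neg, ← hcast, hc'def, AddCircle.coe_neg]
    have hset : {x | labb N (ξ (x - y)) ≠ labb N (ξ x)} =
        (fun x => x + (-y)) ⁻¹' {x | labb N (ξ x - ((c':ℝ) : AddCircle (1:ℝ))) ≠ labb N (ξ x)} := by
      ext x
      simp only [Set.mem_setOf_eq, Set.mem_preimage]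
      have h1 : ξ (x + -y) = ξ (x - y) := by rw [← sub_eq_add_neg]
      have h2 : ξ (x - y) - ((c':ℝ) : AddCircle (1:ℝ)) = ξ x := by
        rw [map_sub, ← hcast, hc'def, AddCircle.coe_neg]; abel
      rw [h1, h2]
      exact ⟨Ne.symm, Ne.symm⟩
    rw [hset, measure_preimage_add_right, hnorm, abs_of_neg hc0]
    exact lemA μ ξ hN hc'0 hcast'

end Aux3
namespace Aux4
open Aux Aux2 Aux3

variable {G : Type} [AddCommGroup G] [TopologicalSpace G] [IsTopologicalAddGroup G]
  [MeasurableSpace G] [BorelSpace G]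

/-- label map of the Bohr partition -/
def Lmap (S : Finset (GChar G)) (N : ℕ) (x : G) : {ξ // ξ ∈ S} → ℕ :=
  fun ξ => labb N (ξ.1 x)

lemma measurable_Lmap (S : Finset (GChar G)) (N : ℕ) : Measurable (Lmap S N) :=
  measurable_pi_lambda _ fun ξ => (measurable_labb N).comp ξ.1.continuous.measurable

lemma bohrPartAt_eq {S : Finset (GChar G)} {N : ℕ} (hN : 0 < N) (x : G) :
    BohrPartAt S N x = {y | Lmap S N y = Lmap S N x} := by
  ext y
  constructor
  · intro h
    funext ξ
    have hk := exists_mem_circIco N hN (ξ.1 x)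
    have := h ξ.1 ξ.2 _ hk
    have h2 := (mem_circIco_iff _ (ξ.1 y)).1 this
    simpa [Lmap] using h2
  · intro h ξ hξ k hk
    have h1 : labb N (ξ x) = (k : ℕ) := (mem_circIco_iff k (ξ x)).1 hk
    have h2 : labb N (ξ y) = labb N (ξ x) := congrFun h ⟨ξ, hξ⟩
    exact (mem_circIco_iff k (ξ y)).2 (h2.trans h1)

lemma partProj_congr {S : Finset (GChar G)} {N : ℕ} (hN : 0 < N)
    (μ : Measure G) (f : G → ℝ) {x x' : G} (h : Lmap S N x' = Lmap S N x) :
    partProj μ S N f x' = partProj μ S N f x := by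
  unfold partProj
  rw [bohrPartAt_eq hN, bohrPartAt_eq hN]
  congr 1
  ext y
  simp [h]

lemma measurable_partProj {S : Finset (GChar G)} {N : ℕ} (hN : 0 < N)
    (μ : Measure G) (f : G → ℝ) : Measurable (partProj μ S N f) := by
  have : partProj μ S N f =
      (fun m : {ξ // ξ ∈ S} → ℕ => ⨍ y in {y | Lmap S N y = m}, f y ∂μ) ∘ Lmap S N := by
    funext x
    simp only [Function.comp_apply, partProj, bohrPartAt_eq hN]
  rw [this]
  exact (measurable_of_countable _).comp (measurable_Lmap S N)

lemma partProj_mem_Icc {S : Finset (GChar G)} {N : ℕ}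
    (μ : Measure G) [IsFiniteMeasure μ] {f : G → ℝ} (hf : Measurable f)
    (hficc : ∀ x, f x ∈ Set.Icc (0:ℝ) 1) (x : G) :
    partProj μ S N f x ∈ Set.Icc (0:ℝ) 1 := by
  unfold partProj
  rw [setAverage_eq]
  set A := BohrPartAt S N x
  rcases eq_or_ne (μ A) 0 with h0 | h0
  · rw [Measure.restrict_eq_zero.2 h0]
    simp
  have hAtop : μ A ≠ ⊤ := measure_ne_top μ A
  have htR : 0 < (μ A).toReal := ENNReal.toReal_pos h0 hAtop
  have hint : IntegrableOn f A μ := by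
    refine Integrable.integrableOn ?_
    refine Integrable.mono' (integrable_const 1) hf.aestronglyMeasurable ?_
    filter_upwards with z
    rw [Real.norm_eq_abs, abs_le]
    exact ⟨by linarith [(hficc z).1], (hficc z).2⟩
  have h1 : 0 ≤ ∫ y in A, f y ∂μ :=
    setIntegral_nonneg_of_ae (Filter.Eventually.of_forall fun z => (hficc z).1)
  have h2 : ∫ y in A, f y ∂μ ≤ (μ A).toReal := by
    calc ∫ y in A, f y ∂μ ≤ ∫ _ in A, (1:ℝ) ∂μ := by
          refine setIntegral_mono_ae hint (integrable_const 1) ?_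
          exact Filter.Eventually.of_forall fun z => (hficc z).2
    _ = (μ A).toReal := by simp; rfl
  constructor
  · positivity
  · rw [smul_eq_mul]
    calc (μ A).toReal⁻¹ * ∫ y in A, f y ∂μ ≤ (μ A).toReal⁻¹ * (μ A).toReal := by gcongr
    _ = 1 := inv_mul_cancel₀ htR.ne'

end Aux4

/-- Corollary 2.4, equation (1): if `ρ ≤ ε₀²δ/|S|` with `δ = 1/N`, then for every
`f : G → [0,1]`, `‖f|_𝔅 − μ_B * (f|_𝔅)‖_{L²} ≤ Cε₀`. -/
theorem proj_approx_conv :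
    ∃ C : ℝ, 0 < C ∧
      ∀ (G : Type) [AddCommGroup G] [TopologicalSpace G] [IsTopologicalAddGroup G]
        [CompactSpace G] [MeasurableSpace G] [BorelSpace G]
        (μ : Measure G) [IsProbabilityMeasure μ] [μ.IsAddHaarMeasure]
        (S : Finset (GChar G)) (ε₀ ρ : ℝ) (N : ℕ), 0 < ε₀ → 0 < N → 0 < ρ →
        ρ ≤ ε₀ ^ 2 * ((1:ℝ)/N) / S.card →
        ∀ f : G → ℝ, Measurable f → (∀ x, f x ∈ Set.Icc (0:ℝ) 1) →
          eLpNorm (fun x =>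
              partProj μ S N f x - mollify μ (BohrSet S ρ) (partProj μ S N f) x) 2 μ ≤
            ENNReal.ofReal (C * ε₀) := by
  classical
  refine ⟨Real.sqrt 2, Real.sqrt_pos.2 two_pos, ?_⟩
  intro G _ _ _ _ _ _ μ _ _ S ε₀ ρ N hε₀ hN hρ hρle f hf hficc
  have hNR : (0:ℝ) < N := by exact_mod_cast hN
  have hScard : 0 < S.card := by
    by_contra hc
    push_neg at hc
    have h0 : S.card = 0 := Nat.le_zero.1 hc
    rw [h0] at hρle
    simp at hρle
    linarith
  have hcR : (0:ℝ) < S.card := by exact_mod_cast hScard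
  have harith : (S.card : ℝ) * (2 * N * ρ) ≤ 2 * ε₀ ^ 2 := by
    have h2 : ε₀^2 * (1/N)/S.card * (N * S.card) = ε₀^2 := by field_simp
    have h1 : ρ * ((N:ℝ) * S.card) ≤ ε₀^2 := by
      calc ρ * ((N:ℝ)*S.card) ≤ (ε₀^2*(1/N)/S.card) * ((N:ℝ)*S.card) := by
            gcongr
      _ = ε₀^2 := h2
    calc (S.card : ℝ) * (2 * N * ρ) = 2*(ρ * ((N:ℝ)*S.card)) := by ring
    _ ≤ 2*ε₀^2 := by linarith
  set g := partProj μ S N f with hgdef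
  set B := BohrSet S ρ with hBdef
  have hmg : Measurable g := Aux4.measurable_partProj hN μ f
  have hg01 : ∀ x, g x ∈ Set.Icc (0:ℝ) 1 := fun x => Aux4.partProj_mem_Icc μ hf hficc x
  have hgabs : ∀ x x' : G, |g x - g x'| ≤ 1 := by
    intro x x'
    rw [abs_le]
    constructor <;> [linarith [(hg01 x).1, (hg01 x').2]; linarith [(hg01 x).2, (hg01 x').1]]
  have hBopen : IsOpen B := by
    have he : B = ⋂ ξ ∈ S, {x : G | ‖(ξ : GChar G) x‖ < ρ} := by
      rw [hBdef]; ext x; simp [BohrSet]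
    rw [he]
    exact isOpen_biInter_finset fun ξ _ =>
      isOpen_lt (continuous_norm.comp ξ.continuous) continuous_const
  have hB0 : (0:G) ∈ B := by
    intro ξ hξ
    rw [map_zero, norm_zero]
    exact hρ
  have hBmeas : MeasurableSet B := hBopen.measurableSet
  have hBpos : 0 < μ B := hBopen.measure_pos μ ⟨0, hB0⟩
  have hBne : μ B ≠ 0 := hBpos.ne'
  have hBtop : μ B ≠ ⊤ := measure_ne_top μ B
  set b' : ℝ := (μ B).toReal with hb'
  have hb'pos : 0 < b' := ENNReal.toReal_pos hBne hBtop
  set h : G → ℝ := fun x => g x - mollify μ B g x with hhdef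
  -- integrability of translates
  have hgxy : ∀ x : G, Measurable (fun y => g (x - y)) := fun x =>
    hmg.comp (continuous_const.sub continuous_id).measurable
  have hgint : ∀ x : G, Integrable (fun y => g (x - y)) (μ.restrict B) := by
    intro x
    refine Integrable.mono' (integrable_const 1) (hgxy x).aestronglyMeasurable ?_
    filter_upwards with z
    rw [Real.norm_eq_abs, abs_le]
    exact ⟨by linarith [(hg01 (x - z)).1], (hg01 (x - z)).2⟩
  have hint2 : ∀ x : G, Integrable (fun y => g x - g (x - y)) (μ.restrict B) :=
    fun x => (integrable_const (g x)).sub (hgint x)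
  -- formula for h
  have key : ∀ x, h x = (∫ y in B, (g x - g (x - y)) ∂μ) / b' := by
    intro x
    rw [hhdef]
    simp only [mollify]
    rw [integral_sub (integrable_const (g x)) (hgint x), setIntegral_const]
    rw [← hb', smul_eq_mul]
    field_simp
    rfl
  -- mollify in [0,1], |h| ≤ 1
  have hmol : ∀ x, mollify μ B g x ∈ Set.Icc (0:ℝ) 1 := by
    intro x
    unfold mollify
    rw [← hb']
    constructor
    · apply div_nonneg _ hb'pos.le
      exact setIntegral_nonneg_of_ae (Filter.Eventually.of_forall fun z => (hg01 (x - z)).1)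
    · rw [div_le_one hb'pos]
      calc ∫ y in B, g (x - y) ∂μ ≤ ∫ _ in B, (1:ℝ) ∂μ := by
            refine setIntegral_mono_ae (hgint x) (integrable_const 1) ?_
            exact Filter.Eventually.of_forall fun z => (hg01 (x - z)).2
      _ = b' := by simp [hb']; rfl
  have hh1 : ∀ x, (‖h x‖₊ : ℝ≥0∞) ≤ 1 := by
    intro x
    have habs : |h x| ≤ 1 := by
      rw [hhdef]
      simp only []
      rw [abs_le]
      constructor <;>
        [linarith [(hg01 x).1, (hmol x).2]; linarith [(hg01 x).2, (hmol x).1]]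
    rw [← enorm_eq_nnnorm, Real.enorm_eq_ofReal_abs]
    calc ENNReal.ofReal |h x| ≤ ENNReal.ofReal 1 := ENNReal.ofReal_le_ofReal habs
    _ = 1 := ENNReal.ofReal_one
  -- pointwise bound by the inner lintegral
  have step1 : ∀ x, (‖h x‖₊ : ℝ≥0∞) ≤
      (μ B)⁻¹ * ∫⁻ y in B, (‖g x - g (x - y)‖₊ : ℝ≥0∞) ∂μ := by
    intro x
    have e1 : (‖h x‖₊ : ℝ≥0∞) =
        (‖∫ y in B, (g x - g (x - y)) ∂μ‖₊ : ℝ≥0∞) / μ B := by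
      rw [key x]
      simp only [← enorm_eq_nnnorm]
      rw [Real.enorm_eq_ofReal_abs, abs_div, abs_of_pos hb'pos,
        ENNReal.ofReal_div_of_pos hb'pos, Real.enorm_eq_ofReal_abs, hb',
        ENNReal.ofReal_toReal hBtop]
    rw [e1, ENNReal.div_eq_inv_mul]
    gcongr
    exact enorm_integral_le_lintegral_enorm _
  -- the product bad set
  set Dset : Set (G × G) :=
    {p | (fun ξ : {ξ // ξ ∈ S} => Aux2.labb N (ξ.1 p.1 - ξ.1 p.2)) ≠ Aux4.Lmap S N p.1}
    with hDset
  have hDsetMeas : MeasurableSet Dset := by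
    have h1 : Measurable fun p : G × G =>
        (fun ξ : {ξ // ξ ∈ S} => Aux2.labb N (ξ.1 p.1 - ξ.1 p.2)) := by
      refine measurable_pi_lambda _ fun ξ => ?_
      have hm1 : Measurable fun p : G × G => ξ.1 p.1 :=
        ξ.1.continuous.measurable.comp measurable_fst
      have hm2 : Measurable fun p : G × G => ξ.1 p.2 :=
        ξ.1.continuous.measurable.comp measurable_snd
      exact (Aux2.measurable_labb N).comp (hm1.sub hm2)
    have h2 : Measurable fun p : G × G => Aux4.Lmap S N p.1 :=
      (Aux4.measurable_Lmap S N).comp measurable_fst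
    exact (measurableSet_eq_fun h1 h2).compl
  -- pointwise domination by the indicator of Dset
  have hpt : ∀ x y : G, (‖g x - g (x - y)‖₊ : ℝ≥0∞) ≤ Dset.indicator 1 (x, y) := by
    intro x y
    by_cases hxD : (x, y) ∈ Dset
    · rw [Set.indicator_of_mem hxD]
      rw [← enorm_eq_nnnorm, Real.enorm_eq_ofReal_abs]
      refine le_trans (ENNReal.ofReal_le_ofReal (hgabs x (x - y))) ?_
      simp
    · rw [Set.indicator_of_notMem hxD]
      have hLL : (fun ξ : {ξ // ξ ∈ S} => Aux2.labb N (ξ.1 x - ξ.1 y)) =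
          Aux4.Lmap S N x := not_not.1 hxD
      have hLeq : Aux4.Lmap S N (x - y) = Aux4.Lmap S N x := by
        funext ξ
        have h3 := congrFun hLL ξ
        simpa [Aux4.Lmap, map_sub] using h3
      have : g (x - y) = g x := Aux4.partProj_congr hN μ f hLeq
      rw [this]
      simp
  -- for each y ∈ B, the section has small measure
  have inner : ∀ y ∈ B, (∫⁻ x, Dset.indicator 1 (x, y) ∂μ) ≤
      ENNReal.ofReal (2 * ε₀ ^ 2) := by
    intro y hy
    set D : Set G := {x | Aux4.Lmap S N (x - y) ≠ Aux4.Lmap S N x} with hD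
    have hDmeas : MeasurableSet D := by
      have h1 : Measurable fun x : G => Aux4.Lmap S N (x - y) := by
        refine measurable_pi_lambda _ fun ξ => ?_
        have : (fun x : G => Aux4.Lmap S N (x - y) ξ) =
            fun x : G => Aux2.labb N (ξ.1 x - ξ.1 y) := by
          funext x; simp [Aux4.Lmap, map_sub]
        rw [this]
        exact (Aux2.measurable_labb N).comp
          (ξ.1.continuous.measurable.sub measurable_const)
      have h2 : MeasurableSet {x : G | Aux4.Lmap S N (x - y) = Aux4.Lmap S N x} :=
        measurableSet_eq_fun h1 (Aux4.measurable_Lmap S N)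
      exact h2.compl
    have hsection : ∀ x, Dset.indicator (1 : G × G → ℝ≥0∞) (x, y) = D.indicator (1 : G → ℝ≥0∞) x := by
      intro x
      have hmem : (x, y) ∈ Dset ↔ x ∈ D := by
        rw [hDset, hD]
        simp only [Set.mem_setOf_eq]
        constructor
        · intro hne heq
          refine hne ?_
          funext ξ
          have := congrFun heq ξ
          simpa [Aux4.Lmap, map_sub] using this
        · intro hne hnq
          refine hne ?_
          funext ξ
          have := congrFun hnq ξ
          simpa [Aux4.Lmap, map_sub] using this
      by_cases hm : x ∈ D
      · rw [Set.indicator_of_mem (hmem.2 hm), Set.indicator_of_mem hm]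
        rfl
      · rw [Set.indicator_of_notMem (fun hc => hm (hmem.1 hc)),
          Set.indicator_of_notMem hm]
    calc (∫⁻ x, Dset.indicator 1 (x, y) ∂μ) = ∫⁻ x, D.indicator 1 x ∂μ := by
          simp_rw [hsection]
    _ = μ D := lintegral_indicator_one hDmeas
    _ ≤ μ (⋃ ξ ∈ S, {x : G | Aux2.labb N ((ξ : GChar G) (x - y)) ≠ Aux2.labb N (ξ x)}) := by
          refine measure_mono ?_
          intro x hx
          simp only [Set.mem_iUnion, Set.mem_setOf_eq]
          by_contra hcon
          push_neg at hcon
          refine hx ?_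
          funext ξ
          exact hcon ξ.1 ξ.2
    _ ≤ ∑ ξ ∈ S, μ {x : G | Aux2.labb N ((ξ : GChar G) (x - y)) ≠ Aux2.labb N (ξ x)} :=
          measure_biUnion_finset_le S _
    _ ≤ ∑ ξ ∈ S, ENNReal.ofReal (2 * N * ρ) := by
          refine Finset.sum_le_sum fun ξ hξ => ?_
          refine le_trans (Aux3.lemB μ ξ hN y) (ENNReal.ofReal_le_ofReal ?_)
          have hyB := hy ξ hξ
          have h0 : (0:ℝ) ≤ 2 * N := by positivity
          nlinarith [norm_nonneg ((ξ : GChar G) y)]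
    _ = (S.card : ℝ≥0∞) * ENNReal.ofReal (2 * N * ρ) := by
          rw [Finset.sum_const, nsmul_eq_mul]
    _ ≤ ENNReal.ofReal (2 * ε₀ ^ 2) := by
          rw [← ENNReal.ofReal_natCast, ← ENNReal.ofReal_mul (by positivity)]
          exact ENNReal.ofReal_le_ofReal harith
  -- measurability of the indicator on the product
  have hkmeas : Measurable fun p : G × G => Dset.indicator (1 : G × G → ℝ≥0∞) p :=
    measurable_one.indicator hDsetMeas
  -- main lintegral chain
  have main : (∫⁻ x, (‖h x‖₊ : ℝ≥0∞) ∂μ) ≤ ENNReal.ofReal (2 * ε₀ ^ 2) := by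
    calc (∫⁻ x, (‖h x‖₊ : ℝ≥0∞) ∂μ)
        ≤ ∫⁻ x, (μ B)⁻¹ * ∫⁻ y in B, (‖g x - g (x - y)‖₊ : ℝ≥0∞) ∂μ ∂μ :=
          lintegral_mono step1
    _ = (μ B)⁻¹ * ∫⁻ x, ∫⁻ y in B, (‖g x - g (x - y)‖₊ : ℝ≥0∞) ∂μ ∂μ :=
          lintegral_const_mul' _ _ (ENNReal.inv_ne_top.2 hBne)
    _ ≤ (μ B)⁻¹ * ∫⁻ x, ∫⁻ y in B, Dset.indicator 1 (x, y) ∂μ ∂μ := by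
          refine mul_le_mul_right (lintegral_mono fun x => lintegral_mono fun y => ?_) _
          exact hpt x y
    _ = (μ B)⁻¹ * ∫⁻ y in B, ∫⁻ x, Dset.indicator 1 (x, y) ∂μ ∂μ := by
          rw [lintegral_lintegral_swap hkmeas.aemeasurable]
    _ ≤ (μ B)⁻¹ * ∫⁻ _ in B, ENNReal.ofReal (2 * ε₀ ^ 2) ∂μ :=
          mul_le_mul_right (setLIntegral_mono measurable_const inner) _
    _ = (μ B)⁻¹ * (ENNReal.ofReal (2 * ε₀ ^ 2) * μ B) := by
          rw [setLIntegral_const]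
    _ = ENNReal.ofReal (2 * ε₀ ^ 2) := by
          rw [mul_comm (ENNReal.ofReal _) (μ B), ← mul_assoc, ENNReal.inv_mul_cancel hBne hBtop,
            one_mul]
  -- conclude
  have hsq : (∫⁻ x, (‖h x‖₊ : ℝ≥0∞) ^ (2:ℝ) ∂μ) ≤ ENNReal.ofReal (2 * ε₀ ^ 2) := by
    refine le_trans (lintegral_mono fun x => ?_) main
    calc (‖h x‖₊ : ℝ≥0∞) ^ (2:ℝ) ≤ (‖h x‖₊ : ℝ≥0∞) ^ (1:ℝ) :=
          ENNReal.rpow_le_rpow_of_exponent_ge (hh1 x) (by norm_num) -- check arg order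
    _ = (‖h x‖₊ : ℝ≥0∞) := ENNReal.rpow_one _
  have heLp : eLpNorm h 2 μ = (∫⁻ x, (‖h x‖₊ : ℝ≥0∞) ^ (2:ℝ) ∂μ) ^ (1/2 : ℝ) := by
    rw [eLpNorm_eq_lintegral_rpow_enorm_toReal (by norm_num) (by norm_num)]
    norm_num
    rfl
  have hfinal : eLpNorm h 2 μ ≤ ENNReal.ofReal (Real.sqrt 2 * ε₀) := by
    rw [heLp]
    calc (∫⁻ x, (‖h x‖₊ : ℝ≥0∞) ^ (2:ℝ) ∂μ) ^ (1/2 : ℝ)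
        ≤ (ENNReal.ofReal (2 * ε₀ ^ 2)) ^ (1/2 : ℝ) :=
          ENNReal.rpow_le_rpow hsq (by norm_num)
    _ = ENNReal.ofReal ((2 * ε₀ ^ 2) ^ (1/2 : ℝ)) :=
          ENNReal.ofReal_rpow_of_nonneg (by positivity) (by norm_num)
    _ = ENNReal.ofReal (Real.sqrt 2 * ε₀) := by
          congr 1
          rw [← Real.sqrt_eq_rpow, Real.sqrt_mul (by norm_num : (0:ℝ) ≤ 2),
            Real.sqrt_sq hε₀.le]
  exact hfinal
end
end

section
/- Let G be a compact abelian group with Haar probability measure μ, let S ⊆ Ĝ be finite, let ρ > 0, and let B = B(S,ρ) with μ(B) > 0; set μ_B = 1_B/μ(B). Let f: G → ℂ be measurable with |f| ≤ 1, and suppose η > 0 is such that |f̂(ξ)| ≤ η for every ξ ∉ S. Then the function f₂ := f − f * μ_B satisfies sup_{ξ ∈ Ĝ} |f̂₂(ξ)| ≤ max(2η, 2πρ). -/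
open MeasureTheory

noncomputable section

/-- Convolution `f * μ_B` of a complex-valued function with the normalized indicator of `B`. -/
def mollifyC {G : Type} [AddCommGroup G] [MeasurableSpace G]
    (μ : Measure G) (B : Set G) (f : G → ℂ) : G → ℂ :=
  fun x => (∫ y in B, f (x - y) ∂μ) / ((μ B).toReal : ℂ)


section AuxProof

lemma aux_norm_one_sub_exp (θ : ℝ) : ‖1 - Complex.exp (θ * Complex.I)‖ ≤ |θ| := by
  rw [norm_sub_rev, Complex.exp_mul_I]
  have : (Complex.cos θ + Complex.sin θ * Complex.I - 1)
      = ((Real.cos θ - 1 : ℝ) : ℂ) + ((Real.sin θ : ℝ) : ℂ) * Complex.I := by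
    push_cast [Complex.ofReal_cos, Complex.ofReal_sin]; ring
  rw [this, Complex.norm_add_mul_I]
  rw [show |θ| = Real.sqrt (θ^2) by rw [Real.sqrt_sq_eq_abs]]
  apply Real.sqrt_le_sqrt
  have h := Real.one_sub_sq_div_two_le_cos (x := θ)
  have h2 := Real.sin_sq_add_cos_sq θ
  nlinarith

lemma aux_norm_one_sub_toCircle (t : AddCircle (1:ℝ)) :
    ‖1 - (AddCircle.toCircle t : ℂ)‖ ≤ 2 * Real.pi * ‖t‖ := by
  induction t using QuotientAddGroup.induction_on with
  | H r =>
    set r' : ℝ := r - round r with hr'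
    have hcoe : ((r : AddCircle (1:ℝ))) = ((r' : ℝ) : AddCircle (1:ℝ)) := by
      rw [hr']
      symm
      rw [QuotientAddGroup.eq]
      refine AddSubgroup.mem_zmultiples_iff.2 ⟨round r, by push_cast [zsmul_eq_mul]; ring⟩
    have hnorm : ‖((r' : ℝ) : AddCircle (1:ℝ))‖ = |r'| := by
      rw [AddCircle.norm_eq]
      simp [hr', round_sub_intCast]
    rw [hcoe, hnorm, AddCircle.toCircle_apply_mk, Circle.coe_exp]
    calc ‖1 - Complex.exp (((2 * Real.pi / 1 * r' : ℝ)) * Complex.I)‖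
        ≤ |2 * Real.pi / 1 * r'| := aux_norm_one_sub_exp _
      _ = 2 * Real.pi * |r'| := by
          rw [abs_mul, abs_of_nonneg (by positivity : (0:ℝ) ≤ 2 * Real.pi / 1)]
          ring

variable {G : Type} [AddCommGroup G] [TopologicalSpace G] [IsTopologicalAddGroup G]
    [CompactSpace G] [MeasurableSpace G] [BorelSpace G]
    (μ : Measure G) [IsProbabilityMeasure μ] [μ.IsAddHaarMeasure]

lemma aux_hasCompactSupport {α : Type*} [TopologicalSpace α] [CompactSpace α]
    (h : α → ℂ) : HasCompactSupport h :=
  IsCompact.of_isClosed_subset isCompact_univ (isClosed_tsupport _) (Set.subset_univ _)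

lemma aux_key (B : Set G) (f : G → ℂ) (hint : Integrable f μ) (ξ : GChar G)
    (hMint : Integrable
      (fun x => (∫ y in B, f (x - y) ∂μ) * (AddCircle.toCircle (-(ξ x)) : ℂ)) μ) :
    ∫ x, (∫ y in B, f (x - y) ∂μ) * (AddCircle.toCircle (-(ξ x)) : ℂ) ∂μ
      = (fCoeff μ f ξ) * ∫ y in B, (AddCircle.toCircle (-(ξ y)) : ℂ) ∂μ := by
  set E : G → ℂ := fun x => (AddCircle.toCircle (-(ξ x)) : ℂ) with hE
  have hEcont : Continuous E :=
    continuous_induced_dom.comp (AddCircle.continuous_toCircle.comp ((map_continuous ξ).neg))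
  have hE1 : ∀ x, ‖E x‖ = 1 := fun x => by simp [hE, Circle.norm_coe]
  have hEmul : ∀ a b : G, E (a + b) = E a * E b := fun a b => by
    simp only [hE]
    rw [map_add, neg_add, AddCircle.toCircle_add]; simp
  have hIB_norm : ‖∫ y in B, E y ∂μ‖ ≤ 1 := by
    calc ‖∫ y in B, E y ∂μ‖ ≤ 1 * ((μ.restrict B) Set.univ).toReal :=
          norm_integral_le_of_norm_le_const (Filter.Eventually.of_forall fun y => (hE1 y).le)
      _ ≤ 1 := by
          rw [one_mul, Measure.restrict_apply_univ]
          exact ENNReal.toReal_le_of_le_ofReal zero_le_one (by simpa using prob_le_one (μ := μ))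
  suffices h : ∀ ε : ℝ, 0 < ε →
      ‖(∫ x, (∫ y in B, f (x - y) ∂μ) * E x ∂μ) - (fCoeff μ f ξ) * ∫ y in B, E y ∂μ‖ ≤ 2 * ε by
    by_contra hne
    have hpos : 0 < ‖(∫ x, (∫ y in B, f (x - y) ∂μ) * E x ∂μ)
        - (fCoeff μ f ξ) * ∫ y in B, E y ∂μ‖ := by
      rw [norm_pos_iff, sub_ne_zero]
      exact hne
    have := h (‖(∫ x, (∫ y in B, f (x - y) ∂μ) * E x ∂μ)
        - (fCoeff μ f ξ) * ∫ y in B, E y ∂μ‖ / 4) (by positivity)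
    linarith
  intro ε hε
  obtain ⟨g, hgε, hgint⟩ := hint.exists_boundedContinuous_integral_sub_le hε
  have hgc : Continuous (g : G → ℂ) := g.continuous
  -- Fubini for the continuous approximation
  have hswap : ∫ x, (∫ y in B, (g : G → ℂ) (x - y) ∂μ) * E x ∂μ
      = (∫ x, (g : G → ℂ) x * E x ∂μ) * ∫ y in B, E y ∂μ := by
    have hFc : Continuous (Function.uncurry fun x y : G => (g : G → ℂ) (x - y) * E x) :=
      ((hgc.comp (continuous_fst.sub continuous_snd)).mul (hEcont.comp continuous_fst))
    calc ∫ x, (∫ y in B, (g : G → ℂ) (x - y) ∂μ) * E x ∂μ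
        = ∫ x, ∫ y in B, (g : G → ℂ) (x - y) * E x ∂μ ∂μ := by
          congr 1; funext x; rw [integral_mul_const]
      _ = ∫ y in B, ∫ x, (g : G → ℂ) (x - y) * E x ∂μ ∂μ :=
          integral_integral_swap_of_hasCompactSupport hFc (aux_hasCompactSupport _)
      _ = ∫ y in B, (∫ x, (g : G → ℂ) x * E x ∂μ) * E y ∂μ := by
          refine integral_congr_ae (Filter.Eventually.of_forall fun y => ?_)
          have hpt : ∀ x : G, (g : G → ℂ) (x - y) * E x
              = ((g : G → ℂ) (x - y) * E (x - y)) * E y := fun x => by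
            have : E x = E (x - y) * E y := by
              rw [← hEmul]; congr 1; abel
            rw [this]; ring
          simp_rw [hpt]
          rw [integral_mul_const,
            integral_sub_right_eq_self (fun u => (g : G → ℂ) u * E u) y]
      _ = (∫ x, (g : G → ℂ) x * E x ∂μ) * ∫ y in B, E y ∂μ := integral_const_mul _ _
  set ψ : G → ℂ := fun x => f x - (g : G → ℂ) x with hψ
  have hψint : Integrable ψ μ := hint.sub hgint
  -- coefficient estimate
  have hgE_int : Integrable (fun x => (g : G → ℂ) x * E x) μ :=
    ((hgc.mul hEcont)).integrable_of_hasCompactSupport (aux_hasCompactSupport _)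
  have hfE_int : Integrable (fun x => f x * E x) μ := by
    have := hint.bdd_mul (c := 1) (hEcont.aestronglyMeasurable) (Filter.Eventually.of_forall fun x => (hE1 x).le)
    exact this.congr (Filter.Eventually.of_forall fun x => mul_comm _ _)
  have hcoefg : ‖fCoeff μ f ξ - ∫ x, (g : G → ℂ) x * E x ∂μ‖ ≤ ε := by
    have heq : fCoeff μ f ξ - ∫ x, (g : G → ℂ) x * E x ∂μ = ∫ x, ψ x * E x ∂μ := by
      rw [fCoeff, ← integral_sub hfE_int hgE_int]
      refine integral_congr_ae (Filter.Eventually.of_forall fun x => ?_)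
      simp only [hψ, hE]; ring
    rw [heq]
    calc ‖∫ x, ψ x * E x ∂μ‖ ≤ ∫ x, ‖ψ x * E x‖ ∂μ := norm_integral_le_integral_norm _
      _ = ∫ x, ‖ψ x‖ ∂μ := by
          refine integral_congr_ae (Filter.Eventually.of_forall fun x => ?_)
          show ‖ψ x * E x‖ = ‖ψ x‖
          rw [norm_mul, hE1, mul_one]
      _ ≤ ε := by simpa [hψ] using hgε
  -- pointwise bound on the mollified remainder
  have hMψ : ∀ x : G, ‖∫ y in B, ψ (x - y) ∂μ‖ ≤ ε := fun x => by
    calc ‖∫ y in B, ψ (x - y) ∂μ‖ ≤ ∫ y in B, ‖ψ (x - y)‖ ∂μ := norm_integral_le_integral_norm _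
      _ ≤ ∫ y, ‖ψ (x - y)‖ ∂μ :=
          setIntegral_le_integral ((hψint.comp_sub_left x).norm)
            (Filter.Eventually.of_forall fun y => norm_nonneg _)
      _ = ∫ y, ‖ψ y‖ ∂μ := integral_sub_left_eq_self (fun y => ‖ψ y‖) μ x
      _ ≤ ε := by simpa [hψ] using hgε
  have hMsplit : ∀ x : G, (∫ y in B, f (x - y) ∂μ)
      = (∫ y in B, (g : G → ℂ) (x - y) ∂μ) + ∫ y in B, ψ (x - y) ∂μ := fun x => by
    rw [← integral_add ((hgint.comp_sub_left x).integrableOn)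
      ((hψint.comp_sub_left x).integrableOn)]
    refine integral_congr_ae (Filter.Eventually.of_forall fun y => ?_)
    simp [hψ]
  have hMgE_int : Integrable (fun x => (∫ y in B, (g : G → ℂ) (x - y) ∂μ) * E x) μ := by
    have hFc : Continuous (Function.uncurry fun x y : G => (g : G → ℂ) (x - y) * E x) :=
      ((hgc.comp (continuous_fst.sub continuous_snd)).mul (hEcont.comp continuous_fst))
    have hF_int : Integrable (Function.uncurry fun x y : G => (g : G → ℂ) (x - y) * E x)
        (μ.prod (μ.restrict B)) := by
      refine ⟨((aux_hasCompactSupport _).stronglyMeasurable_of_prod hFc).aestronglyMeasurable, ?_⟩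
      refine HasFiniteIntegral.of_bounded (C := ‖g‖) (Filter.Eventually.of_forall fun p => ?_)
      calc ‖(g : G → ℂ) (p.1 - p.2) * E p.1‖ = ‖(g : G → ℂ) (p.1 - p.2)‖ := by
            rw [norm_mul, hE1, mul_one]
        _ ≤ ‖g‖ := g.norm_coe_le_norm _
    have := hF_int.integral_prod_left
    refine this.congr (Filter.Eventually.of_forall fun x => ?_)
    show ∫ y in B, (g : G → ℂ) (x - y) * E x ∂μ = (∫ y in B, (g : G → ℂ) (x - y) ∂μ) * E x
    rw [integral_mul_const]
  have hdiff : (∫ x, (∫ y in B, f (x - y) ∂μ) * E x ∂μ)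
      - (∫ x, (g : G → ℂ) x * E x ∂μ) * (∫ y in B, E y ∂μ)
      = ∫ x, (∫ y in B, ψ (x - y) ∂μ) * E x ∂μ := by
    rw [← hswap, ← integral_sub hMint hMgE_int]
    refine integral_congr_ae (Filter.Eventually.of_forall fun x => ?_)
    show (∫ y in B, f (x - y) ∂μ) * E x - (∫ y in B, (g : G → ℂ) (x - y) ∂μ) * E x
        = (∫ y in B, ψ (x - y) ∂μ) * E x
    rw [hMsplit x]; ring
  have hterm1 : ‖(∫ x, (∫ y in B, f (x - y) ∂μ) * E x ∂μ)
      - (∫ x, (g : G → ℂ) x * E x ∂μ) * (∫ y in B, E y ∂μ)‖ ≤ ε := by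
    rw [hdiff]
    calc ‖∫ x, (∫ y in B, ψ (x - y) ∂μ) * E x ∂μ‖ ≤ ε * (μ Set.univ).toReal :=
          norm_integral_le_of_norm_le_const (Filter.Eventually.of_forall fun x => by
            rw [norm_mul, hE1, mul_one]; exact hMψ x)
      _ = ε := by simp
  calc ‖(∫ x, (∫ y in B, f (x - y) ∂μ) * E x ∂μ) - (fCoeff μ f ξ) * ∫ y in B, E y ∂μ‖
      = ‖((∫ x, (∫ y in B, f (x - y) ∂μ) * E x ∂μ)
          - (∫ x, (g : G → ℂ) x * E x ∂μ) * (∫ y in B, E y ∂μ))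
        + ((∫ x, (g : G → ℂ) x * E x ∂μ) - fCoeff μ f ξ) * (∫ y in B, E y ∂μ)‖ := by
        congr 1; ring
    _ ≤ ε + ε * 1 := by
        refine (norm_add_le _ _).trans (add_le_add hterm1 ?_)
        rw [norm_mul]
        refine mul_le_mul ?_ hIB_norm (norm_nonneg _) hε.le
        rw [norm_sub_rev]; exact hcoefg
    _ = 2 * ε := by ring

end AuxProof


/-- If `|f| ≤ 1` ... main theorem. -/
theorem uniform_part_fourier_small
    (G : Type) [AddCommGroup G] [TopologicalSpace G] [IsTopologicalAddGroup G]
    [CompactSpace G] [MeasurableSpace G] [BorelSpace G]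
    (μ : Measure G) [IsProbabilityMeasure μ] [μ.IsAddHaarMeasure]
    (S : Finset (GChar G)) (ρ : ℝ) (hρ : 0 < ρ) (hB : 0 < μ (BohrSet S ρ))
    (f : G → ℂ) (hmeas : Measurable f) (hbd : ∀ x, ‖f x‖ ≤ 1)
    (η : ℝ) (hη : 0 < η) (hoffS : ∀ ξ : GChar G, ξ ∉ S → ‖fCoeff μ f ξ‖ ≤ η) :
    ∀ ξ : GChar G,
      ‖fCoeff μ (fun x => f x - mollifyC μ (BohrSet S ρ) f x) ξ‖ ≤
        max (2 * η) (2 * Real.pi * ρ) := by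
  intro ξ
  set B : Set G := BohrSet S ρ with hBdef
  set c : ℝ := (μ B).toReal with hcdef
  have hc : 0 < c := ENNReal.toReal_pos hB.ne' (measure_ne_top μ B)
  have hc1 : c ≤ 1 := by
    rw [hcdef]
    exact ENNReal.toReal_le_of_le_ofReal zero_le_one (by simpa using prob_le_one (μ := μ))
  have hcC : ((c : ℝ) : ℂ) ≠ 0 := by exact_mod_cast hc.ne'
  set E : G → ℂ := fun x => (AddCircle.toCircle (-(ξ x)) : ℂ) with hE
  have hEcont : Continuous E :=
    continuous_induced_dom.comp (AddCircle.continuous_toCircle.comp ((map_continuous ξ).neg))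
  have hE1 : ∀ x, ‖E x‖ = 1 := fun x => by simp [hE, Circle.norm_coe]
  have hmax : (0:ℝ) ≤ max (2 * η) (2 * Real.pi * ρ) :=
    le_max_of_le_left (by linarith)
  have hfE_int : Integrable (fun x => f x * E x) μ := by
    have hint : Integrable f μ := by
      refine ⟨hmeas.aestronglyMeasurable, ?_⟩
      exact HasFiniteIntegral.of_bounded (C := 1) (Filter.Eventually.of_forall hbd)
    have := hint.bdd_mul (c := 1) (hEcont.aestronglyMeasurable) (Filter.Eventually.of_forall fun x => (hE1 x).le)
    exact this.congr (Filter.Eventually.of_forall fun x => mul_comm _ _)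
  have hint : Integrable f μ := by
    refine ⟨hmeas.aestronglyMeasurable, ?_⟩
    exact HasFiniteIntegral.of_bounded (C := 1) (Filter.Eventually.of_forall hbd)
  have hfc : fCoeff μ (fun x => f x - mollifyC μ B f x) ξ
      = ∫ x, (f x - mollifyC μ B f x) * E x ∂μ := rfl
  by_cases hI : Integrable (fun x => (f x - mollifyC μ B f x) * E x) μ
  swap
  · rw [hfc, integral_undef hI, norm_zero]
    exact hmax
  · have hgE : Integrable (fun x => mollifyC μ B f x * E x) μ := by
      refine (hfE_int.sub hI).congr (Filter.Eventually.of_forall fun x => ?_)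
      show f x * E x - (f x - mollifyC μ B f x) * E x = mollifyC μ B f x * E x
      ring
    have hME : Integrable (fun x => (∫ y in B, f (x - y) ∂μ) * E x) μ := by
      refine (hgE.mul_const ((c : ℝ) : ℂ)).congr (Filter.Eventually.of_forall fun x => ?_)
      show mollifyC μ B f x * E x * ((c : ℝ) : ℂ) = (∫ y in B, f (x - y) ∂μ) * E x
      rw [mollifyC, ← hcdef]
      field_simp
    have hkey := aux_key μ B f hint ξ hME
    set IB : ℂ := ∫ y in B, E y ∂μ with hIB
    have hIBc : ‖IB‖ ≤ c := by
      calc ‖IB‖ ≤ 1 * ((μ.restrict B) Set.univ).toReal :=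
            norm_integral_le_of_norm_le_const (Filter.Eventually.of_forall fun y => (hE1 y).le)
        _ = c := by rw [one_mul, Measure.restrict_apply_univ]
    have hsplit : fCoeff μ (fun x => f x - mollifyC μ B f x) ξ
        = fCoeff μ f ξ * (1 - IB / ((c : ℝ) : ℂ)) := by
      rw [hfc]
      have h1 : ∫ x, (f x - mollifyC μ B f x) * E x ∂μ
          = (∫ x, f x * E x ∂μ) - ∫ x, mollifyC μ B f x * E x ∂μ := by
        rw [← integral_sub hfE_int hgE]
        refine integral_congr_ae (Filter.Eventually.of_forall fun x => ?_)
        show (f x - mollifyC μ B f x) * E x = f x * E x - mollifyC μ B f x * E x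
        ring
      have h2 : ∫ x, mollifyC μ B f x * E x ∂μ
          = (∫ x, (∫ y in B, f (x - y) ∂μ) * E x ∂μ) / ((c : ℝ) : ℂ) := by
        rw [← integral_div]
        refine integral_congr_ae (Filter.Eventually.of_forall fun x => ?_)
        show mollifyC μ B f x * E x = (∫ y in B, f (x - y) ∂μ) * E x / ((c : ℝ) : ℂ)
        rw [mollifyC, ← hcdef]
        field_simp
      rw [h1, h2, hkey]
      have : fCoeff μ f ξ = ∫ x, f x * E x ∂μ := rfl
      rw [← this]
      field_simp
    rw [hsplit, norm_mul]
    have hf1 : ‖fCoeff μ f ξ‖ ≤ 1 := by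
      calc ‖fCoeff μ f ξ‖ ≤ 1 * (μ Set.univ).toReal :=
            norm_integral_le_of_norm_le_const (Filter.Eventually.of_forall fun x => by
              rw [norm_mul, hE1, mul_one]; exact hbd x)
        _ = 1 := by simp
    by_cases hξ : ξ ∈ S
    · -- bound by 2πρ
      have hBopen : IsOpen B := by
        have : B = ⋂ ζ ∈ S, {x : G | ‖ζ x‖ < ρ} := by
          ext x; simp [hBdef, BohrSet, Set.mem_iInter]
        rw [this]
        refine isOpen_biInter_finset fun ζ _ => ?_
        exact isOpen_lt (continuous_norm.comp (map_continuous ζ)) continuous_const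
      have hnum : ‖((c : ℝ) : ℂ) - IB‖ ≤ 2 * Real.pi * ρ * c := by
        have heq : ((c : ℝ) : ℂ) - IB = ∫ y in B, (1 - E y) ∂μ := by
          rw [integral_sub (integrable_const _)
            (hEcont.integrable_of_hasCompactSupport
              (IsCompact.of_isClosed_subset isCompact_univ (isClosed_tsupport _)
                (Set.subset_univ _))).integrableOn]
          congr 1
          rw [integral_const, Measure.real, Measure.restrict_apply_univ]
          simp [hcdef]
        rw [heq]
        refine norm_setIntegral_le_of_norm_le_const (measure_lt_top _ _)
          fun y hy => ?_
        calc ‖1 - E y‖ ≤ 2 * Real.pi * ‖(-(ξ y) : AddCircle (1:ℝ))‖ :=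
              aux_norm_one_sub_toCircle _
          _ = 2 * Real.pi * ‖ξ y‖ := by rw [norm_neg]
          _ ≤ 2 * Real.pi * ρ := by
              have : ‖ξ y‖ < ρ := hy ξ hξ
              have hπ : (0:ℝ) ≤ 2 * Real.pi := by positivity
              nlinarith
      have h1c : ‖(1 : ℂ) - IB / ((c : ℝ) : ℂ)‖ ≤ 2 * Real.pi * ρ := by
        have : (1 : ℂ) - IB / ((c : ℝ) : ℂ) = (((c : ℝ) : ℂ) - IB) / ((c : ℝ) : ℂ) := by
          field_simp
        rw [this, norm_div]
        have hcnorm : ‖((c : ℝ) : ℂ)‖ = c := by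
          rw [Complex.norm_real, Real.norm_eq_abs, abs_of_pos hc]
        rw [hcnorm, div_le_iff₀ hc]
        exact hnum
      calc ‖fCoeff μ f ξ‖ * ‖(1 : ℂ) - IB / ((c : ℝ) : ℂ)‖ ≤ 1 * (2 * Real.pi * ρ) :=
            mul_le_mul hf1 h1c (norm_nonneg _) zero_le_one
        _ = 2 * Real.pi * ρ := by ring
        _ ≤ max (2 * η) (2 * Real.pi * ρ) := le_max_right _ _
    · -- bound by 2η
      have h1c : ‖(1 : ℂ) - IB / ((c : ℝ) : ℂ)‖ ≤ 2 := by
        refine (norm_sub_le _ _).trans ?_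
        rw [norm_one, norm_div]
        have hcnorm : ‖((c : ℝ) : ℂ)‖ = c := by
          rw [Complex.norm_real, Real.norm_eq_abs, abs_of_pos hc]
        rw [hcnorm]
        have : ‖IB‖ / c ≤ 1 := by
          rw [div_le_one hc]; exact hIBc
        linarith
      calc ‖fCoeff μ f ξ‖ * ‖(1 : ℂ) - IB / ((c : ℝ) : ℂ)‖ ≤ η * 2 :=
            mul_le_mul (hoffS ξ hξ) h1c (norm_nonneg _) hη.le
        _ = 2 * η := by ring
        _ ≤ max (2 * η) (2 * Real.pi * ρ) := le_max_left _ _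
end
end

section
/- Let X, Y, Z be independent random variables taking values in standard Borel spaces Ω_X, Ω_Y, Ω_Z, and let φ: Ω_X × Ω_Y × Ω_Z → [0,1] be measurable with E[φ(X,Y,Z)] = α. Then E[E(φ|X,Y) · E(φ|X,Z) · E(φ|Y,Z)] ≥ m(α), where m(α) is the infimum of the same quantity over measurable φ: [0,1]³ → [0,1] with expectation α when X, Y, Z are independent uniform random variables on [0,1]. -/
open MeasureTheory

noncomputable section

/-- The trilinear functional `T(φ)` from Mandache's variational problem. -/
def Tfun (φ : ℝ → ℝ → ℝ → ℝ) : ℝ :=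
  ∫ x in Set.Icc (0:ℝ) 1, ∫ y in Set.Icc (0:ℝ) 1, ∫ z in Set.Icc (0:ℝ) 1,
    (∫ z' in Set.Icc (0:ℝ) 1, φ x y z') * (∫ y' in Set.Icc (0:ℝ) 1, φ x y' z) *
      (∫ x' in Set.Icc (0:ℝ) 1, φ x' y z)

/-- `m(α)`: the infimum of `T(φ)` over measurable `φ : [0,1]³ → [0,1]` with `∫ φ = α`. -/
def mFun (α : ℝ) : ℝ :=
  sInf { t : ℝ | ∃ φ : ℝ → ℝ → ℝ → ℝ,
    Measurable (fun p : ℝ × ℝ × ℝ => φ p.1 p.2.1 p.2.2) ∧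
    (∀ x y z, φ x y z ∈ Set.Icc (0:ℝ) 1) ∧
    (∫ x in Set.Icc (0:ℝ) 1, ∫ y in Set.Icc (0:ℝ) 1, ∫ z in Set.Icc (0:ℝ) 1, φ x y z) = α ∧
    t = Tfun φ }

/-- `m'(α)`: the value at `α` of the largest convex function on `[0,1]` lying below `m`. -/
def mPrime (α : ℝ) : ℝ :=
  sSup { t : ℝ | ∃ g : ℝ → ℝ, ConvexOn ℝ (Set.Icc (0:ℝ) 1) g ∧
    (∀ x ∈ Set.Icc (0:ℝ) 1, g x ≤ mFun x) ∧ t = g α }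

section Helpers
open Set Filter Topology ProbabilityTheory

abbrev P01 : Measure ℝ := volume.restrict (Set.Icc (0:ℝ) 1)

instance : IsProbabilityMeasure P01 := ⟨by simp [Real.volume_Icc]⟩

/-- quantile function -/
def quant (ν : Measure ℝ) (t : ℝ) : ℝ := sInf {x | t ≤ cdf ν x}

variable {ν : Measure ℝ} [IsProbabilityMeasure ν]

lemma quant_le_iff {t : ℝ} (ht0 : 0 < t) (ht1 : t < 1) (x : ℝ) :
    quant ν t ≤ x ↔ t ≤ cdf ν x := by
  have hne : {x | t ≤ cdf ν x}.Nonempty := by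
    obtain ⟨y, hy⟩ := ((tendsto_cdf_atTop ν).eventually (eventually_gt_nhds ht1)).exists
    exact ⟨y, hy.le⟩
  have hbdd : BddBelow {x | t ≤ cdf ν x} := by
    obtain ⟨y, hy⟩ := ((tendsto_cdf_atBot ν).eventually (eventually_lt_nhds ht0)).exists
    exact ⟨y, fun z hz => le_of_not_gt fun h =>
      absurd (le_trans hz (monotone_cdf ν h.le)) (not_le.2 hy)⟩
  constructor
  · intro h
    have hmem : t ≤ cdf ν (quant ν t) := by
      obtain ⟨u, -, hu, humem⟩ := exists_seq_tendsto_sInf hne hbdd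
      have h1 : Tendsto (fun n => cdf ν (u n)) atTop (𝓝 (cdf ν (quant ν t))) := by
        refine ((cdf ν).right_continuous (quant ν t)).tendsto.comp ?_
        exact tendsto_nhdsWithin_iff.2 ⟨hu, Eventually.of_forall fun n => csInf_le hbdd (humem n)⟩
      exact ge_of_tendsto h1 (Eventually.of_forall fun n => humem n)
    exact hmem.trans (monotone_cdf ν h)
  · intro h
    exact csInf_le hbdd h

/-- modified quantile, constant outside (0,1) -/
def qf (ν : Measure ℝ) : ℝ → ℝ := (Ioo (0:ℝ) 1).piecewise (quant ν) (fun _ => quant ν (1/2))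

lemma qf_preimage_Iic (x : ℝ) :
    qf ν ⁻¹' Iic x =
      (Ioo (0:ℝ) 1 ∩ Iic (cdf ν x)) ∪ ((Ioo (0:ℝ) 1)ᶜ ∩ {t | quant ν (1/2) ≤ x}) := by
  ext t
  by_cases ht : t ∈ Ioo (0:ℝ) 1
  · simp [qf, Set.piecewise_eq_of_mem _ _ _ ht, ht, quant_le_iff (ν := ν) ht.1 ht.2 x]
  · simp [qf, Set.piecewise_eq_of_notMem _ _ _ ht, ht]

lemma measurable_qf : Measurable (qf ν) := by
  apply measurable_of_Iic
  intro x
  rw [qf_preimage_Iic]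
  have hset : MeasurableSet {t : ℝ | quant ν (1/2) ≤ x} := by
    by_cases h : quant ν (1/2) ≤ x
    · have : {t : ℝ | quant ν (1/2) ≤ x} = univ := eq_univ_of_forall fun _ => h
      rw [this]; exact MeasurableSet.univ
    · have : {t : ℝ | quant ν (1/2) ≤ x} = ∅ := eq_empty_of_forall_notMem fun _ => h
      rw [this]; exact MeasurableSet.empty
  exact (measurableSet_Ioo.inter measurableSet_Iic).union (measurableSet_Ioo.compl.inter hset)

lemma map_qf : Measure.map (qf ν) P01 = ν := by
  have hP : P01 = volume.restrict (Ioo (0:ℝ) 1) :=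
    (Measure.restrict_congr_set Ioo_ae_eq_Icc).symm
  have : IsProbabilityMeasure (Measure.map (qf ν) P01) :=
    Measure.isProbabilityMeasure_map measurable_qf.aemeasurable
  refine Measure.ext_of_Iic _ _ (fun x => ?_)
  rw [Measure.map_apply measurable_qf measurableSet_Iic, hP,
    Measure.restrict_apply (measurable_qf measurableSet_Iic), qf_preimage_Iic]
  have hc0 : 0 ≤ cdf ν x := cdf_nonneg ν x
  have hc1 : cdf ν x ≤ 1 := cdf_le_one ν x
  have hset : ((Ioo (0:ℝ) 1 ∩ Iic (cdf ν x)) ∪ ((Ioo (0:ℝ) 1)ᶜ ∩ {t | quant ν (1/2) ≤ x}))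
      ∩ Ioo (0:ℝ) 1 = Ioo (0:ℝ) 1 ∩ Iic (cdf ν x) := by
    ext t; constructor
    · rintro ⟨h1 | h1, h2⟩
      · exact h1
      · exact absurd h2 h1.1
    · intro h; exact ⟨Or.inl h, h.1⟩
  rw [hset, ← ofReal_cdf]
  rcases lt_or_ge (cdf ν x) 1 with h | h
  · have : Ioo (0:ℝ) 1 ∩ Iic (cdf ν x) = Ioc 0 (cdf ν x) := by
      ext t
      simp only [mem_inter_iff, mem_Ioo, mem_Iic, mem_Ioc]
      exact ⟨fun ⟨⟨a, _⟩, c⟩ => ⟨a, c⟩, fun ⟨a, c⟩ => ⟨⟨a, lt_of_le_of_lt c h⟩, c⟩⟩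
    rw [this, Real.volume_Ioc, sub_zero]
  · have h1 : cdf ν x = 1 := le_antisymm hc1 h
    have : Ioo (0:ℝ) 1 ∩ Iic (cdf ν x) = Ioo 0 1 := by
      rw [h1]; exact inter_eq_left.2 fun t ht => ht.2.le
    rw [this, Real.volume_Ioo, h1]
    norm_num

lemma exists_rep (Ω : Type) [MeasurableSpace Ω] [StandardBorelSpace Ω]
    (ρ : Measure Ω) [IsProbabilityMeasure ρ] :
    ∃ F : ℝ → Ω, Measurable F ∧ Measure.map F P01 = ρ := by
  have hne : Nonempty Ω := by
    by_contra h
    rw [not_nonempty_iff] at h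
    have h1 : (univ : Set Ω) = ∅ := Set.univ_eq_empty_iff.2 h
    have h2 := measure_univ (μ := ρ)
    rw [h1] at h2
    simp at h2
  obtain ⟨e, he⟩ := MeasureTheory.exists_measurableEmbedding_real Ω
  set ν' : Measure ℝ := Measure.map e ρ with hν'
  have : IsProbabilityMeasure ν' := Measure.isProbabilityMeasure_map he.measurable.aemeasurable
  set f : ℝ → ℝ := qf ν' with hf
  have hfm : Measurable f := measurable_qf
  have hmap : Measure.map f P01 = ν' := map_qf
  set F : ℝ → Ω := fun t => Function.invFun e (f t) with hF
  have hFm : Measurable F := by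
    intro A hA
    have himg : MeasurableSet (e '' A) := he.measurableSet_image' hA
    have hpre : F ⁻¹' A =
        (f ⁻¹' (e '' A)) ∪ ((f ⁻¹' (range e))ᶜ ∩ {t | Classical.choice hne ∈ A}) := by
      ext t
      by_cases h : f t ∈ range e
      · obtain ⟨a, ha⟩ := h
        simp only [hF, mem_preimage, mem_union, mem_inter_iff, mem_compl_iff, mem_setOf_eq]
        rw [← ha, Function.leftInverse_invFun he.injective a]
        constructor
        · intro hh; exact Or.inl ⟨a, hh, rfl⟩
        · rintro (⟨b, hb, hba⟩ | ⟨hc, _⟩)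
          · rwa [← he.injective hba]
          · exact absurd ⟨a, rfl⟩ hc
      · simp only [hF, mem_preimage, mem_union, mem_inter_iff, mem_compl_iff, mem_setOf_eq]
        rw [Function.invFun_neg h]
        constructor
        · intro hh; exact Or.inr ⟨h, hh⟩
        · rintro (⟨b, _, hba⟩ | ⟨_, hc⟩)
          · exact absurd ⟨b, hba⟩ h
          · exact hc
    rw [hpre]
    have hconst : MeasurableSet {t : ℝ | Classical.choice hne ∈ A} :=
      MeasurableSet.const _
    exact (hfm himg).union ((hfm he.measurableSet_range).compl.inter hconst)
  refine ⟨F, hFm, ?_⟩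
  have hae : (fun t => e (F t)) =ᵐ[P01] f := by
    have hnull : P01 (f ⁻¹' (range e)ᶜ) = 0 := by
      rw [← Measure.map_apply hfm he.measurableSet_range.compl, hmap, hν',
        Measure.map_apply he.measurable he.measurableSet_range.compl]
      simp
    filter_upwards [measure_eq_zero_iff_ae_notMem.1 hnull] with t ht
    have h : f t ∈ range e := not_not.1 ht
    exact Function.invFun_eq h
  have hmape : Measure.map e (Measure.map F P01) = Measure.map e ρ := by
    rw [Measure.map_map he.measurable hFm]
    calc Measure.map (e ∘ F) P01 = Measure.map f P01 := Measure.map_congr hae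
    _ = ν' := hmap
  ext A hA
  have h1 : Measure.map F P01 A = Measure.map e (Measure.map F P01) (e '' A) := by
    rw [Measure.map_apply he.measurable (he.measurableSet_image' hA),
      preimage_image_eq _ he.injective]
  have h2 : ρ A = Measure.map e ρ (e '' A) := by
    rw [Measure.map_apply he.measurable (he.measurableSet_image' hA),
      preimage_image_eq _ he.injective]
  rw [h1, h2, hmape]

lemma integrable_of_mem_Icc {δ : Type*} [MeasurableSpace δ] {ρ : Measure δ}
    [IsProbabilityMeasure ρ] {g : δ → ℝ} (hg : AEStronglyMeasurable g ρ)
    (hb : ∀ d, g d ∈ Icc (0:ℝ) 1) : Integrable g ρ :=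
  ⟨hg, HasFiniteIntegral.of_bounded (C := 1)
    (Eventually.of_forall fun d => by
      rw [Real.norm_eq_abs, abs_le]
      exact ⟨by linarith [(hb d).1], (hb d).2⟩)⟩

lemma integral_mem_Icc {δ : Type*} [MeasurableSpace δ] {ρ : Measure δ}
    [IsProbabilityMeasure ρ] {g : δ → ℝ} (hg : AEStronglyMeasurable g ρ)
    (hb : ∀ d, g d ∈ Icc (0:ℝ) 1) : (∫ d, g d ∂ρ) ∈ Icc (0:ℝ) 1 := by
  constructor
  · exact integral_nonneg fun d => (hb d).1
  · calc ∫ d, g d ∂ρ ≤ ∫ _, (1:ℝ) ∂ρ :=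
          integral_mono (integrable_of_mem_Icc hg hb) (integrable_const 1) fun d => (hb d).2
    _ = 1 := by simp

lemma iterated_change {A B C : Type} [MeasurableSpace A] [MeasurableSpace B] [MeasurableSpace C]
    (νA : Measure A) (νB : Measure B) (νC : Measure C)
    [IsProbabilityMeasure νA] [IsProbabilityMeasure νB] [IsProbabilityMeasure νC]
    {fA : ℝ → A} {fB : ℝ → B} {fC : ℝ → C}
    (hfA : Measurable fA) (hfB : Measurable fB) (hfC : Measurable fC)
    (hA : Measure.map fA P01 = νA) (hB : Measure.map fB P01 = νB)
    (hC : Measure.map fC P01 = νC)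
    (G : A × B × C → ℝ) (hG : Measurable G) (hGb : ∀ p, G p ∈ Icc (0:ℝ) 1) :
    (∫ x in Icc (0:ℝ) 1, ∫ y in Icc (0:ℝ) 1, ∫ z in Icc (0:ℝ) 1, G (fA x, fB y, fC z))
      = ∫ p, G p ∂(νA.prod (νB.prod νC)) := by
  set m : ℝ × ℝ × ℝ → A × B × C := Prod.map fA (Prod.map fB fC) with hm
  have hmm : Measurable m := hfA.prodMap (hfB.prodMap hfC)
  have hmap : Measure.map m (P01.prod (P01.prod P01)) = νA.prod (νB.prod νC) := by
    rw [hm, ← Measure.map_prod_map _ _ hfA (hfB.prodMap hfC),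
      ← Measure.map_prod_map _ _ hfB hfC, hA, hB, hC]
  have hint : Integrable (fun q => G (m q)) (P01.prod (P01.prod P01)) :=
    integrable_of_mem_Icc (hG.comp hmm).aestronglyMeasurable fun q => hGb (m q)
  have h1 : ∫ p, G p ∂(νA.prod (νB.prod νC)) = ∫ q, G (m q) ∂(P01.prod (P01.prod P01)) := by
    rw [← hmap, integral_map hmm.aemeasurable hG.aestronglyMeasurable]
  rw [h1, integral_prod _ hint]
  refine integral_congr_ae (Eventually.of_forall fun x => ?_)
  have hint2 : Integrable (fun r : ℝ × ℝ => G (m (x, r))) (P01.prod P01) :=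
    integrable_of_mem_Icc ((hG.comp (hmm.comp measurable_prodMk_left))).aestronglyMeasurable
      fun r => hGb _
  show (∫ y in Icc (0:ℝ) 1, ∫ z in Icc (0:ℝ) 1, G (fA x, fB y, fC z))
      = ∫ r : ℝ × ℝ, G (m (x, r)) ∂(P01.prod P01)
  rw [integral_prod _ hint2]
  rfl

end Helpers

/-- Mandache's variational problem does not depend on the underlying probability space:
for independent random variables `X, Y, Z` and `φ` of expectation `α`,
`E[E(φ|X,Y)·E(φ|X,Z)·E(φ|Y,Z)] ≥ m(α)`. (By independence, the conditional expectations
are realized by integrating out the remaining variable against its law.) -/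
theorem variational_lower_bound_any_space
    (Ω ΩX ΩY ΩZ : Type)
    [MeasurableSpace Ω] [MeasurableSpace ΩX] [MeasurableSpace ΩY] [MeasurableSpace ΩZ]
    [StandardBorelSpace ΩX] [StandardBorelSpace ΩY] [StandardBorelSpace ΩZ]
    (μ : Measure Ω) [IsProbabilityMeasure μ]
    (X : Ω → ΩX) (Y : Ω → ΩY) (Z : Ω → ΩZ)
    (hX : Measurable X) (hY : Measurable Y) (hZ : Measurable Z)
    (hindep : Measure.map (fun ω => (X ω, Y ω, Z ω)) μ =
      (Measure.map X μ).prod ((Measure.map Y μ).prod (Measure.map Z μ)))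
    (φ : ΩX → ΩY → ΩZ → ℝ)
    (hφm : Measurable (fun p : ΩX × ΩY × ΩZ => φ p.1 p.2.1 p.2.2))
    (hφb : ∀ x y z, φ x y z ∈ Set.Icc (0:ℝ) 1)
    (α : ℝ) (hexp : (∫ ω, φ (X ω) (Y ω) (Z ω) ∂μ) = α) :
    mFun α ≤
      ∫ ω,
        (∫ z, φ (X ω) (Y ω) z ∂(Measure.map Z μ)) *
        (∫ y, φ (X ω) y (Z ω) ∂(Measure.map Y μ)) *
        (∫ x, φ x (Y ω) (Z ω) ∂(Measure.map X μ)) ∂μ := by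
  classical
  set νX := Measure.map X μ with hνX
  set νY := Measure.map Y μ with hνY
  set νZ := Measure.map Z μ with hνZ
  have : IsProbabilityMeasure νX := Measure.isProbabilityMeasure_map hX.aemeasurable
  have : IsProbabilityMeasure νY := Measure.isProbabilityMeasure_map hY.aemeasurable
  have : IsProbabilityMeasure νZ := Measure.isProbabilityMeasure_map hZ.aemeasurable
  obtain ⟨fX, hfX, hfXmap⟩ := exists_rep ΩX νX
  obtain ⟨fY, hfY, hfYmap⟩ := exists_rep ΩY νY
  obtain ⟨fZ, hfZ, hfZmap⟩ := exists_rep ΩZ νZ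
  set ν : Measure (ΩX × ΩY × ΩZ) := νX.prod (νY.prod νZ) with hν
  -- change of variables μ → ν
  have hXYZ : Measurable (fun ω => (X ω, Y ω, Z ω)) := hX.prodMk (hY.prodMk hZ)
  have claimB : ∀ H : ΩX × ΩY × ΩZ → ℝ, Measurable H →
      (∫ ω, H (X ω, Y ω, Z ω) ∂μ) = ∫ p, H p ∂ν := by
    intro H hH
    rw [← hindep, integral_map hXYZ.aemeasurable hH.aestronglyMeasurable]
  -- the transported function
  set ψ : ℝ → ℝ → ℝ → ℝ := fun x y z => φ (fX x) (fY y) (fZ z) with hψ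
  have hψm : Measurable (fun p : ℝ × ℝ × ℝ => ψ p.1 p.2.1 p.2.2) :=
    hφm.comp ((hfX.comp measurable_fst).prodMk
      ((hfY.comp (measurable_fst.comp measurable_snd)).prodMk
        (hfZ.comp (measurable_snd.comp measurable_snd))))
  have hψb : ∀ x y z, ψ x y z ∈ Set.Icc (0:ℝ) 1 := fun x y z => hφb _ _ _
  -- expectation is preserved
  have hexpψ : (∫ x in Set.Icc (0:ℝ) 1, ∫ y in Set.Icc (0:ℝ) 1, ∫ z in Set.Icc (0:ℝ) 1,
      ψ x y z) = α := by
    have h := iterated_change νX νY νZ hfX hfY hfZ hfXmap hfYmap hfZmap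
      (fun p => φ p.1 p.2.1 p.2.2) hφm (fun p => hφb _ _ _)
    rw [h, ← claimB _ hφm, hexp]
  -- slice measurability
  have hsl1 : ∀ (a : ΩX) (b : ΩY), Measurable (fun z => φ a b z) :=
    fun a b => hφm.comp (measurable_const.prodMk (measurable_const.prodMk measurable_id))
  have hsl2 : ∀ (a : ΩX) (c : ΩZ), Measurable (fun y => φ a y c) :=
    fun a c => hφm.comp (measurable_const.prodMk (measurable_id.prodMk measurable_const))
  have hsl3 : ∀ (b : ΩY) (c : ΩZ), Measurable (fun x => φ x b c) :=
    fun b c => hφm.comp (measurable_id.prodMk (measurable_const.prodMk measurable_const))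
  -- the product-of-conditional-expectations function
  set G : ΩX × ΩY × ΩZ → ℝ := fun p =>
    (∫ z, φ p.1 p.2.1 z ∂νZ) * (∫ y, φ p.1 y p.2.2 ∂νY) * (∫ x, φ x p.2.1 p.2.2 ∂νX)
    with hG
  have hGm : Measurable G := by
    have h1 : Measurable fun p : ΩX × ΩY × ΩZ => ∫ z, φ p.1 p.2.1 z ∂νZ := by
      have : StronglyMeasurable fun q : (ΩX × ΩY × ΩZ) × ΩZ => φ q.1.1 q.1.2.1 q.2 :=
        (hφm.comp ((measurable_fst.comp measurable_fst).prodMk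
          (((measurable_fst.comp measurable_snd).comp measurable_fst).prodMk
            measurable_snd))).stronglyMeasurable
      exact this.integral_prod_right'.measurable
    have h2 : Measurable fun p : ΩX × ΩY × ΩZ => ∫ y, φ p.1 y p.2.2 ∂νY := by
      have : StronglyMeasurable fun q : (ΩX × ΩY × ΩZ) × ΩY => φ q.1.1 q.2 q.1.2.2 :=
        (hφm.comp ((measurable_fst.comp measurable_fst).prodMk
          (measurable_snd.prodMk
            ((measurable_snd.comp measurable_snd).comp measurable_fst)))).stronglyMeasurable
      exact this.integral_prod_right'.measurable
    have h3 : Measurable fun p : ΩX × ΩY × ΩZ => ∫ x, φ x p.2.1 p.2.2 ∂νX := by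
      have : StronglyMeasurable fun q : (ΩX × ΩY × ΩZ) × ΩX => φ q.2 q.1.2.1 q.1.2.2 :=
        (hφm.comp (measurable_snd.prodMk
          (((measurable_fst.comp measurable_snd).comp measurable_fst).prodMk
            ((measurable_snd.comp measurable_snd).comp measurable_fst)))).stronglyMeasurable
      exact this.integral_prod_right'.measurable
    exact (h1.mul h2).mul h3
  have hGb : ∀ p, G p ∈ Set.Icc (0:ℝ) 1 := by
    intro p
    have i1 := integral_mem_Icc (ρ := νZ) (hsl1 p.1 p.2.1).aestronglyMeasurable
      (fun d => hφb _ _ _)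
    have i2 := integral_mem_Icc (ρ := νY) (hsl2 p.1 p.2.2).aestronglyMeasurable
      (fun d => hφb _ _ _)
    have i3 := integral_mem_Icc (ρ := νX) (hsl3 p.2.1 p.2.2).aestronglyMeasurable
      (fun d => hφb _ _ _)
    constructor
    · exact mul_nonneg (mul_nonneg i1.1 i2.1) i3.1
    · calc G p ≤ 1 * 1 * 1 := by
            apply mul_le_mul (mul_le_mul i1.2 i2.2 i2.1 (by linarith [i1.1, i1.2])) i3.2 i3.1
            norm_num
      _ = 1 := by norm_num
  -- Tfun ψ equals the triple integral of G ∘ (fX, fY, fZ)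
  have hslice_int : ∀ x y : ℝ, (∫ z' in Set.Icc (0:ℝ) 1, ψ x y z')
      = ∫ z, φ (fX x) (fY y) z ∂νZ := by
    intro x y
    rw [← hfZmap, integral_map hfZ.aemeasurable (hsl1 (fX x) (fY y)).aestronglyMeasurable]
  have hslice_int2 : ∀ x z : ℝ, (∫ y' in Set.Icc (0:ℝ) 1, ψ x y' z)
      = ∫ y, φ (fX x) y (fZ z) ∂νY := by
    intro x z
    rw [← hfYmap, integral_map hfY.aemeasurable (hsl2 (fX x) (fZ z)).aestronglyMeasurable]
  have hslice_int3 : ∀ y z : ℝ, (∫ x' in Set.Icc (0:ℝ) 1, ψ x' y z)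
      = ∫ x, φ x (fY y) (fZ z) ∂νX := by
    intro y z
    rw [← hfXmap, integral_map hfX.aemeasurable (hsl3 (fY y) (fZ z)).aestronglyMeasurable]
  have hT : Tfun ψ = ∫ x in Set.Icc (0:ℝ) 1, ∫ y in Set.Icc (0:ℝ) 1, ∫ z in Set.Icc (0:ℝ) 1,
      G (fX x, fY y, fZ z) := by
    unfold Tfun
    refine integral_congr_ae (Filter.Eventually.of_forall fun x => ?_)
    refine integral_congr_ae (Filter.Eventually.of_forall fun y => ?_)
    refine integral_congr_ae (Filter.Eventually.of_forall fun z => ?_)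
    simp only
    rw [hslice_int x y, hslice_int2 x z, hslice_int3 y z]
  have hfinal : (∫ ω,
        (∫ z, φ (X ω) (Y ω) z ∂(Measure.map Z μ)) *
        (∫ y, φ (X ω) y (Z ω) ∂(Measure.map Y μ)) *
        (∫ x, φ x (Y ω) (Z ω) ∂(Measure.map X μ)) ∂μ) = Tfun ψ := by
    have h1 : (∫ ω,
        (∫ z, φ (X ω) (Y ω) z ∂(Measure.map Z μ)) *
        (∫ y, φ (X ω) y (Z ω) ∂(Measure.map Y μ)) *
        (∫ x, φ x (Y ω) (Z ω) ∂(Measure.map X μ)) ∂μ) = ∫ ω, G (X ω, Y ω, Z ω) ∂μ := rfl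
    rw [h1, claimB G hGm, hT,
      iterated_change νX νY νZ hfX hfY hfZ hfXmap hfYmap hfZmap G hGm hGb]
  rw [hfinal]
  -- conclude by csInf_le
  have hbdd : BddBelow { t : ℝ | ∃ φ : ℝ → ℝ → ℝ → ℝ,
      Measurable (fun p : ℝ × ℝ × ℝ => φ p.1 p.2.1 p.2.2) ∧
      (∀ x y z, φ x y z ∈ Set.Icc (0:ℝ) 1) ∧
      (∫ x in Set.Icc (0:ℝ) 1, ∫ y in Set.Icc (0:ℝ) 1, ∫ z in Set.Icc (0:ℝ) 1, φ x y z) = α ∧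
      t = Tfun φ } := by
    refine ⟨0, fun t ht => ?_⟩
    obtain ⟨φ', _, hb', _, hteq⟩ := ht
    rw [hteq]
    unfold Tfun
    refine integral_nonneg fun x => integral_nonneg fun y => integral_nonneg fun z => ?_
    refine mul_nonneg (mul_nonneg ?_ ?_) ?_ <;>
      exact integral_nonneg fun w => (hb' _ _ _).1
  exact csInf_le hbdd ⟨ψ, hψm, hψb, hexpψ, rfl⟩
end
end
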